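/- arXiv:1708.05847 — 5 statements merged into one kernel-verified Lean document; each statement's English description precedes it below -/
import Mathlib

section
/- Every N-layer closed Π³-net and every N-layer open Π³-net is a Π²-net; that is, every connected component of its bag graph is strongly connected, and every bag admits a witness. -/
open Finset

section PetriBasics

variable {P T : Type} [Fintype P] [Fintype T]

/-- Transition `t` is enabled at marking `m`. -/
def Enabled (Wm : P → T → ℕ) (m : P → ℕ) (t : T) : Prop :=
  ∀ p, Wm p t ≤ m p

/-- The marking obtained by firing transition `t` at marking `m`. -/
def Fire (Wm Wp : P → T → ℕ) (m : P → ℕ) (t : T) : P → ℕ :=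
  fun p => m p - Wm p t + Wp p t

/-- One firing step. -/
def Step (Wm Wp : P → T → ℕ) (m m' : P → ℕ) : Prop :=
  ∃ t, Enabled Wm m t ∧ m' = Fire Wm Wp m t

/-- Reachability. -/
def Reach (Wm Wp : P → T → ℕ) : (P → ℕ) → (P → ℕ) → Prop :=
  Relation.ReflTransGen (Step Wm Wp)

/-- One firing step using a transition from the set `S`. -/
def StepIn (Wm Wp : P → T → ℕ) (S : T → Prop) (m m' : P → ℕ) : Prop :=
  ∃ t, S t ∧ Enabled Wm m t ∧ m' = Fire Wm Wp m t

/-- Reachability using only transitions from the set `S`. -/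
def ReachIn (Wm Wp : P → T → ℕ) (S : T → Prop) : (P → ℕ) → (P → ℕ) → Prop :=
  Relation.ReflTransGen (StepIn Wm Wp S)

/-- The marked net `(N, m0)` is live. -/
def LiveMarked (Wm Wp : P → T → ℕ) (m0 : P → ℕ) : Prop :=
  ∀ (t : T) (m : P → ℕ), Reach Wm Wp m0 m →
    ∃ m', Reach Wm Wp m m' ∧ Enabled Wm m' t

/-- `b` is a bag of the net. -/
def IsBag (Wm Wp : P → T → ℕ) (b : P → ℕ) : Prop :=
  ∃ t, b = (fun p => Wm p t) ∨ b = (fun p => Wp p t)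

/-- Edges of the bag graph. -/
def BagEdge (Wm Wp : P → T → ℕ) (b b' : P → ℕ) : Prop :=
  ∃ t, b = (fun p => Wm p t) ∧ b' = (fun p => Wp p t)

/-- Every connected component of the bag graph is strongly connected. -/
def WeaklyReversible (Wm Wp : P → T → ℕ) : Prop :=
  ∀ b b' : P → ℕ,
    Relation.ReflTransGen (fun x y => BagEdge Wm Wp x y ∨ BagEdge Wm Wp y x) b b' →
    Relation.ReflTransGen (BagEdge Wm Wp) b b'

/-- `w · W(t)`, where `W = W⁺ − W⁻` is the incidence matrix. -/
def IncDot (Wm Wp : P → T → ℕ) (w : P → ℚ) (t : T) : ℚ :=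
  ∑ p, w p * ((Wp p t : ℚ) - (Wm p t : ℚ))

/-- `w` is a witness of the bag `b`. -/
def IsWitness (Wm Wp : P → T → ℕ) (b : P → ℕ) (w : P → ℚ) : Prop :=
  ∀ t, (b = (fun p => Wm p t) → IncDot Wm Wp w t = -1) ∧
       (b = (fun p => Wp p t) → IncDot Wm Wp w t = 1) ∧
       (b ≠ (fun p => Wm p t) → b ≠ (fun p => Wp p t) → IncDot Wm Wp w t = 0)

/-- `N` is a Π²-net. -/
def IsPi2 (Wm Wp : P → T → ℕ) : Prop :=
  WeaklyReversible Wm Wp ∧ ∀ b, IsBag Wm Wp b → ∃ w, IsWitness Wm Wp b w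

/-- The potential of a place: `‖b_p‖ − 1`. -/
def potOf (bag : P → P → ℕ) (p : P) : ℕ := (∑ q, bag p q) - 1

/-- Minimum of `f` over `S`, with default value `d` when `S` is empty. -/
def minPotD {α : Type} (S : Finset α) (f : α → ℕ) (d : ℕ) : ℕ :=
  if h : S.Nonempty then S.inf' h f else d

end PetriBasics

/-- An `Nn`-layer closed Π³-net. -/
structure ClosedPi3 (P T : Type) [Fintype P] [Fintype T] (Nn : ℕ) where
  Wm : P → T → ℕ
  Wp : P → T → ℕ
  no_useless : ∀ t, (fun p => Wm p t) ≠ (fun p => Wp p t)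
  no_dup : ∀ t t' : T, (fun p => Wm p t) = (fun p => Wm p t') →
      (fun p => Wp p t) = (fun p => Wp p t') → t = t'
  /-- the bag associated with each place -/
  bag : P → P → ℕ
  /-- the layer of each place -/
  layer : P → ℕ
  bag_isBag : ∀ p, IsBag Wm Wp (bag p)
  bag_surj : ∀ b, IsBag Wm Wp b → ∃ p, bag p = b
  bag_inj : Function.Injective bag
  bag_self : ∀ p, bag p p = 1
  layer_pos : ∀ p, 1 ≤ layer p
  layer_le : ∀ p, layer p ≤ Nn
  layer_surj : ∀ i, 1 ≤ i → i ≤ Nn → ∃ p, layer p = i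
  edge_layer : ∀ p q : P, BagEdge Wm Wp (bag p) (bag q) → layer p = layer q
  layer_conn : ∀ p q : P, layer p = layer q →
      Relation.ReflTransGen (BagEdge Wm Wp) (bag p) (bag q)
  resource : ∀ p q : P, q ≠ p → 0 < bag p q →
      layer q + 1 = layer p ∧ ∀ r, layer r = layer q → potOf bag r ≤ potOf bag q

namespace ClosedPi3

variable {P T : Type} [Fintype P] [Fintype T] {Nn : ℕ} (C : ClosedPi3 P T Nn)

def pot (p : P) : ℕ := potOf C.bag p

/-- `P_i`: the places of layer `i`. -/
def places (i : ℕ) : Finset P := Finset.univ.filter (fun p => C.layer p = i)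

/-- `POT_i`: the maximal potential in layer `i`. -/
def POT (i : ℕ) : ℕ := (C.places i).sup C.pot

/-- `P_i^max`: the places of maximal potential in layer `i`. -/
def placesMax (i : ℕ) : Finset P := (C.places i).filter (fun p => C.pot p = C.POT i)

/-- `cin(p) = POT_i − pot(p)` for `p ∈ P_i`. -/
def cin (p : P) : ℤ := (C.POT (C.layer p) : ℤ) - (C.pot p : ℤ)

/-- The invariant vector `v^(i)` (for `i = Nn` this is `v^(N)`). -/
def vvec (i : ℕ) : P → ℤ :=
  if i = Nn then (fun p => if C.layer p = Nn then 1 else 0)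
  else fun p => (if C.layer p = i then 1 else 0) + (if C.layer p = i + 1 then C.cin p else 0)

/-- `m · v^(i)`. -/
def vdot (i : ℕ) (m : P → ℕ) : ℤ := ∑ p, C.vvec i p * (m p : ℤ)

/-- `m ∈ Inv_i(m0)`. -/
def InvSet (m0 : P → ℕ) (i : ℕ) (m : P → ℕ) : Prop := C.vdot i m = C.vdot i m0

/-- `m ∈ Live_i`. -/
def LiveSet (i : ℕ) (m : P → ℕ) : Prop :=
  if i = Nn then 0 < ∑ p ∈ C.places Nn, m p
  else minPotD ((C.places (i + 1)).filter (fun p => 0 < m p)) C.pot (C.POT (i + 1))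
        ≤ ∑ p ∈ C.places i, m p

/-- `t` belongs to `⋃ {T_i | S i}`: the input bag of `t` lies in a layer satisfying `S`. -/
def transIn (S : ℕ → Prop) (t : T) : Prop :=
  ∃ p, S (C.layer p) ∧ C.bag p = (fun q => C.Wm q t)

/-- The marking `m` is `i`-live. -/
def iLive (i : ℕ) (m : P → ℕ) : Prop :=
  ∀ t, C.transIn (· ≤ i) t →
    ∃ m', ReachIn C.Wm C.Wp (C.transIn (· ≤ i)) m m' ∧ Enabled C.Wm m' t

end ClosedPi3

/-- An `Nn`-layer open Π³-net over places `P`: it is obtained from an `Nn`-layer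
closed Π³-net over `Option P` by deleting the place `none` (a.k.a. `p_ext`),
which lies in layer `Nn`. -/
structure OpenPi3 (P T : Type) [Fintype P] [Fintype T] (Nn : ℕ) where
  closed : ClosedPi3 (Option P) T Nn
  pext_layer : closed.layer none = Nn

namespace OpenPi3

variable {P T : Type} [Fintype P] [Fintype T] {Nn : ℕ} (O : OpenPi3 P T Nn)

/-- Backward incidence matrix of the open net. -/
def Wm : P → T → ℕ := fun p t => O.closed.Wm (some p) t

/-- Forward incidence matrix of the open net. -/
def Wp : P → T → ℕ := fun p t => O.closed.Wp (some p) t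

def layer (p : P) : ℕ := O.closed.layer (some p)

def pot (p : P) : ℕ := O.closed.pot (some p)

/-- `pot(p_ext)`. -/
def potExt : ℕ := O.closed.pot none

/-- `P_i`: the (remaining) places of layer `i`. -/
def places (i : ℕ) : Finset P := Finset.univ.filter (fun p => O.layer p = i)

/-- `POT_i`, with `POT_N = pot(p_ext)` for open nets. -/
def POT (i : ℕ) : ℕ := if i = Nn then O.potExt else (O.places i).sup O.pot

def placesMax (i : ℕ) : Finset P := (O.places i).filter (fun p => O.pot p = O.POT i)

def cin (p : P) : ℤ := (O.POT (O.layer p) : ℤ) - (O.pot p : ℤ)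

/-- The invariant vector `v^(i)` (used for `1 ≤ i ≤ Nn − 1`). -/
def vvec (i : ℕ) : P → ℤ :=
  fun p => (if O.layer p = i then 1 else 0) + (if O.layer p = i + 1 then O.cin p else 0)

def vdot (i : ℕ) (m : P → ℕ) : ℤ := ∑ p, O.vvec i p * (m p : ℤ)

def InvSet (m0 : P → ℕ) (i : ℕ) (m : P → ℕ) : Prop :=
  if i = Nn then True else O.vdot i m = O.vdot i m0

/-- `m ∈ Live_i` for the open net: for `i = N − 1` the virtual place `p_ext`
always counts as marked. -/
def LiveSet (i : ℕ) (m : P → ℕ) : Prop :=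
  if i = Nn then True
  else if i + 1 = Nn then
    min O.potExt
        (minPotD ((O.places Nn).filter (fun p => 0 < m p)) O.pot O.potExt)
      ≤ ∑ p ∈ O.places i, m p
  else
    minPotD ((O.places (i + 1)).filter (fun p => 0 < m p)) O.pot (O.POT (i + 1))
      ≤ ∑ p ∈ O.places i, m p

def transIn (S : ℕ → Prop) (t : T) : Prop := O.closed.transIn S t

def iLive (i : ℕ) (m : P → ℕ) : Prop :=
  ∀ t, O.transIn (· ≤ i) t →
    ∃ m', ReachIn O.Wm O.Wp (O.transIn (· ≤ i)) m m' ∧ Enabled O.Wm m' t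

end OpenPi3
section AuxProofs

open Finset

/-- Solvability of a unitriangular linear system. -/
lemma solve_tri {Q : Type} [Fintype Q] [DecidableEq Q] (f : Q → ℕ) (B : Matrix Q Q ℚ)
    (hdiag : ∀ q, B q q = 1) (hlt : ∀ q r, r ≠ q → B q r ≠ 0 → f r < f q) (d : Q → ℚ) :
    ∃ w : Q → ℚ, ∀ q, ∑ r, B q r * w r = d q := by
  have hbt : B.BlockTriangular (OrderDual.toDual ∘ f) := by
    intro i j h
    by_contra hne
    rcases eq_or_ne j i with rfl | hji
    · exact lt_irrefl _ h
    · exact absurd h (not_lt.2 (le_of_lt (by simpa using hlt i j hji hne)))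
  have hdet : B.det = 1 := by
    rw [Matrix.BlockTriangular.det hbt]
    apply Finset.prod_eq_one
    intro a _
    have h1 : B.toSquareBlock (OrderDual.toDual ∘ f) a = 1 := by
      ext i j
      rcases eq_or_ne (i : Q) (j : Q) with h | h
      · have hij : i = j := Subtype.ext h
        subst hij
        simp [Matrix.toSquareBlock_def, hdiag]
      · have hz : B (i : Q) (j : Q) = 0 := by
          by_contra hne
          have h3 := hlt _ _ (Ne.symm h) hne
          have hi := i.2; have hj := j.2
          simp only [Function.comp] at hi hj
          have : f (i : Q) = f (j : Q) := OrderDual.toDual.injective (hi.trans hj.symm)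
          omega
        have hne' : i ≠ j := fun hc => h (congrArg Subtype.val hc)
        simp [Matrix.toSquareBlock_def, hz, Matrix.one_apply_ne hne']
    rw [h1]
    exact Matrix.det_one
  refine ⟨B⁻¹.mulVec d, fun q => ?_⟩
  have h2 : B.mulVec (B⁻¹.mulVec d) = d := by
    rw [Matrix.mulVec_mulVec, Matrix.mul_nonsing_inv _ (by simp [hdet]), Matrix.one_mulVec]
  calc ∑ r, B q r * (B⁻¹.mulVec d) r = (B.mulVec (B⁻¹.mulVec d)) q := rfl
    _ = d q := by rw [h2]

variable {P T : Type} [Fintype P] [Fintype T] {Nn : ℕ}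

/-- Weak reversibility for closed Π³-nets. -/
lemma closed_weakRev (C : ClosedPi3 P T Nn) : WeaklyReversible C.Wm C.Wp := by
  have back : ∀ b b', BagEdge C.Wm C.Wp b b' →
      Relation.ReflTransGen (BagEdge C.Wm C.Wp) b' b := by
    rintro b b' ⟨t, hbm, hbp⟩
    obtain ⟨pin, hin⟩ := C.bag_surj (fun p => C.Wm p t) ⟨t, Or.inl rfl⟩
    obtain ⟨pout, hout⟩ := C.bag_surj (fun p => C.Wp p t) ⟨t, Or.inr rfl⟩
    have hl : C.layer pin = C.layer pout := C.edge_layer pin pout ⟨t, hin, hout⟩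
    have h := C.layer_conn pout pin hl.symm
    rw [hin, hout] at h
    rw [hbm, hbp]
    exact h
  intro b b' h
  induction h with
  | refl => exact .refl
  | tail _ hstep ih =>
    rcases hstep with h1 | h2
    · exact ih.tail h1
    · exact ih.trans (back _ _ h2)

/-- Witness existence for closed Π³-nets. -/
lemma closed_witness (C : ClosedPi3 P T Nn) (b : P → ℕ) (hb : IsBag C.Wm C.Wp b) :
    ∃ w, IsWitness C.Wm C.Wp b w := by
  classical
  obtain ⟨p₀, hp₀⟩ := C.bag_surj b hb
  obtain ⟨w, hw⟩ := solve_tri C.layer (fun q r => (C.bag q r : ℚ))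
      (fun q => by simp [C.bag_self])
      (fun q r hrq hne => by
        have hpos : 0 < C.bag q r := Nat.pos_of_ne_zero (by
          intro h0; exact hne (by simp [h0]))
        have h1 := (C.resource q r hrq hpos).1
        omega)
      (fun q => if q = p₀ then 1 else 0)
  refine ⟨w, ?_⟩
  have key : ∀ p, ∑ r, w r * (C.bag p r : ℚ) = if p = p₀ then 1 else 0 := by
    intro p
    rw [← hw p]
    exact Finset.sum_congr rfl (fun r _ => mul_comm _ _)
  intro t
  obtain ⟨pin, hin⟩ := C.bag_surj (fun p => C.Wm p t) ⟨t, Or.inl rfl⟩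
  obtain ⟨pout, hout⟩ := C.bag_surj (fun p => C.Wp p t) ⟨t, Or.inr rfl⟩
  have hdot : IncDot C.Wm C.Wp w t
      = (if pout = p₀ then 1 else 0) - (if pin = p₀ then (1:ℚ) else 0) := by
    unfold IncDot
    rw [← key pin, ← key pout, ← Finset.sum_sub_distrib]
    refine Finset.sum_congr rfl (fun p _ => ?_)
    rw [show C.Wm p t = C.bag pin p from (congrFun hin p).symm,
        show C.Wp p t = C.bag pout p from (congrFun hout p).symm]
    ring
  refine ⟨?_, ?_, ?_⟩
  · intro hbm
    have hi : pin = p₀ := C.bag_inj (by rw [hin, ← hbm, hp₀])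
    have ho : pout ≠ p₀ := by
      intro hc
      exact C.no_useless t (by rw [← hin, ← hout, hi, hc])
    rw [hdot, if_pos hi, if_neg ho]
    norm_num
  · intro hbp
    have ho : pout = p₀ := C.bag_inj (by rw [hout, ← hbp, hp₀])
    have hi : pin ≠ p₀ := by
      intro hc
      exact C.no_useless t (by rw [← hin, ← hout, ho, hc])
    rw [hdot, if_pos ho, if_neg hi]
    norm_num
  · intro hbm hbp
    have hi : pin ≠ p₀ := by
      intro hc
      exact hbm (by rw [← hin, hc, hp₀])
    have ho : pout ≠ p₀ := by
      intro hc
      exact hbp (by rw [← hout, hc, hp₀])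
    rw [hdot, if_neg hi, if_neg ho]
    norm_num

end AuxProofs

section AuxOpen

open Finset

variable {P T : Type} [Fintype P] [Fintype T] {Nn : ℕ}

/-- Weak reversibility for open Π³-nets. -/
lemma open_weakRev (O : OpenPi3 P T Nn) : WeaklyReversible O.Wm O.Wp := by
  have proj : ∀ β γ : Option P → ℕ,
      Relation.ReflTransGen (BagEdge O.closed.Wm O.closed.Wp) β γ →
      Relation.ReflTransGen (BagEdge O.Wm O.Wp)
        (fun r => β (some r)) (fun r => γ (some r)) := by
    intro β γ h
    induction h with
    | refl => exact .refl
    | tail _ hstep ih =>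
      rcases hstep with ⟨t, h1, h2⟩
      refine ih.tail ⟨t, ?_, ?_⟩
      · funext r; exact congrFun h1 (some r)
      · funext r; exact congrFun h2 (some r)
  have back : ∀ b b', BagEdge O.Wm O.Wp b b' →
      Relation.ReflTransGen (BagEdge O.Wm O.Wp) b' b := by
    rintro b b' ⟨t, hbm, hbp⟩
    obtain ⟨pin, hin⟩ := O.closed.bag_surj (fun p => O.closed.Wm p t) ⟨t, Or.inl rfl⟩
    obtain ⟨pout, hout⟩ := O.closed.bag_surj (fun p => O.closed.Wp p t) ⟨t, Or.inr rfl⟩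
    have hl : O.closed.layer pin = O.closed.layer pout :=
      O.closed.edge_layer pin pout ⟨t, hin, hout⟩
    have h := proj _ _ (O.closed.layer_conn pout pin hl.symm)
    have e1 : (fun r => O.closed.bag pout (some r)) = b' := by
      funext r
      exact (congrFun hout (some r)).trans (congrFun hbp r).symm
    have e2 : (fun r => O.closed.bag pin (some r)) = b := by
      funext r
      exact (congrFun hin (some r)).trans (congrFun hbm r).symm
    rw [e1, e2] at h
    exact h
  intro b b' h
  induction h with
  | refl => exact .refl
  | tail _ hstep ih =>
    rcases hstep with h1 | h2
    · exact ih.tail h1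
    · exact ih.trans (back _ _ h2)

/-- Witness existence for open Π³-nets. -/
lemma open_witness (O : OpenPi3 P T Nn) (b : P → ℕ) (hb : IsBag O.Wm O.Wp b) :
    ∃ w, IsWitness O.Wm O.Wp b w := by
  classical
  have hNpos : 1 ≤ Nn := by
    have h1 := O.closed.layer_pos none
    have h2 := O.closed.layer_le none
    omega
  have hnone0 : ∀ q : P, O.closed.bag (some q) none = 0 := by
    intro q
    by_contra h
    have hpos : 0 < O.closed.bag (some q) none := Nat.pos_of_ne_zero h
    have h1 := (O.closed.resource (some q) none (by simp) hpos).1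
    have h2 := O.closed.layer_le (some q)
    have h3 : O.closed.layer none = Nn := O.pext_layer
    omega
  have hres : ∀ q r : P, r ≠ q → 0 < O.closed.bag (some q) (some r) →
      O.closed.layer (some r) + 1 = O.closed.layer (some q) := by
    intro q r hrq hpos
    exact (O.closed.resource (some q) (some r) (by simpa using hrq) hpos).1
  have hsum_some : ∀ q : P, (∑ r : P, O.closed.bag (some q) (some r))
      = O.closed.pot (some q) + 1 := by
    intro q
    have h1 : ∑ p : Option P, O.closed.bag (some q) p
        = O.closed.bag (some q) none + ∑ r : P, O.closed.bag (some q) (some r) :=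
      Fintype.sum_option _
    have hge : 1 ≤ ∑ r : P, O.closed.bag (some q) (some r) := by
      calc 1 = O.closed.bag (some q) (some q) := (O.closed.bag_self (some q)).symm
        _ ≤ ∑ r : P, O.closed.bag (some q) (some r) :=
          Finset.single_le_sum (f := fun r => O.closed.bag (some q) (some r))
            (fun r _ => Nat.zero_le _) (Finset.mem_univ q)
    have h0 := hnone0 q
    unfold ClosedPi3.pot potOf
    omega
  have hsum_none : (∑ r : P, O.closed.bag none (some r)) = O.potExt := by
    have h1 : ∑ p : Option P, O.closed.bag none p
        = O.closed.bag none none + ∑ r : P, O.closed.bag none (some r) :=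
      Fintype.sum_option _
    have h2 : O.closed.bag none none = 1 := O.closed.bag_self none
    unfold OpenPi3.potExt ClosedPi3.pot potOf
    omega
  have hErase : ∀ q : P, (∑ r ∈ Finset.univ.erase q, (O.closed.bag (some q) (some r) : ℚ))
      = (O.closed.pot (some q) : ℚ) := by
    intro q
    have h1 : (∑ r ∈ Finset.univ.erase q, O.closed.bag (some q) (some r))
        + O.closed.bag (some q) (some q) = ∑ r : P, O.closed.bag (some q) (some r) :=
      Finset.sum_erase_add _ _ (Finset.mem_univ q)
    rw [O.closed.bag_self (some q), hsum_some q] at h1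
    have h2 : (∑ r ∈ Finset.univ.erase q, O.closed.bag (some q) (some r))
        = O.closed.pot (some q) := by omega
    rw [← h2]
    push_cast
    rfl
  set tgt : Option P → ℚ :=
    fun p => if (fun r => O.closed.bag p (some r)) = b then 1 else 0 with htgt
  have hrinj : ∀ p p' : Option P, O.closed.layer p = O.closed.layer p' →
      (fun r => O.closed.bag p (some r)) = (fun r => O.closed.bag p' (some r)) → p = p' := by
    intro p p' hl he
    have hbag : O.closed.bag p = O.closed.bag p' := by
      funext x
      cases x with
      | some r => exact congrFun he r
      | none =>
        match p, p' with
        | none, none => rfl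
        | none, some q' =>
          exfalso
          have h1 : O.closed.bag none (some q') = 1 := by
            rw [congrFun he q']; exact O.closed.bag_self (some q')
          have h2 := (O.closed.resource none (some q') (by simp) (by omega)).1
          have h3 : O.closed.layer none = Nn := O.pext_layer
          rw [h3] at hl h2
          omega
        | some q, none =>
          exfalso
          have h1' : O.closed.bag none (some q) = 1 := by
            rw [← congrFun he q]; exact O.closed.bag_self (some q)
          have h2 := (O.closed.resource none (some q) (by simp) (by omega)).1
          have h3 : O.closed.layer none = Nn := O.pext_layer
          rw [h3] at hl h2
          omega
        | some q, some q' => rw [hnone0 q, hnone0 q']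
    exact O.closed.bag_inj hbag
  -- final verification given a solution of the adjusted system
  have final : ∀ (w : P → ℚ) (H : ℕ → ℚ),
      (∀ p : Option P, ∑ r, w r * (O.closed.bag p (some r) : ℚ)
          = tgt p + H (O.closed.layer p)) →
      IsWitness O.Wm O.Wp b w := by
    intro w H key t
    obtain ⟨pin, hin⟩ := O.closed.bag_surj (fun p => O.closed.Wm p t) ⟨t, Or.inl rfl⟩
    obtain ⟨pout, hout⟩ := O.closed.bag_surj (fun p => O.closed.Wp p t) ⟨t, Or.inr rfl⟩
    have hl : O.closed.layer pin = O.closed.layer pout :=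
      O.closed.edge_layer pin pout ⟨t, hin, hout⟩
    have restin : (fun r : P => O.Wm r t) = (fun r => O.closed.bag pin (some r)) := by
      funext r; exact (congrFun hin (some r)).symm
    have restout : (fun r : P => O.Wp r t) = (fun r => O.closed.bag pout (some r)) := by
      funext r; exact (congrFun hout (some r)).symm
    have hdot : IncDot O.Wm O.Wp w t = tgt pout - tgt pin := by
      unfold IncDot
      calc ∑ r, w r * ((O.Wp r t : ℚ) - (O.Wm r t : ℚ))
          = (∑ r, w r * (O.closed.bag pout (some r) : ℚ))
            - ∑ r, w r * (O.closed.bag pin (some r) : ℚ) := by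
            rw [← Finset.sum_sub_distrib]
            refine Finset.sum_congr rfl (fun r _ => ?_)
            rw [show O.Wm r t = O.closed.bag pin (some r) from congrFun restin r,
                show O.Wp r t = O.closed.bag pout (some r) from congrFun restout r]
            ring
        _ = tgt pout - tgt pin := by
            rw [key pin, key pout, hl]; ring
    refine ⟨?_, ?_, ?_⟩
    · intro hbm
      have hbm' : (fun r => O.closed.bag pin (some r)) = b := restin.symm.trans hbm.symm
      have hti : tgt pin = 1 := by simp only [htgt]; rw [if_pos hbm']
      have hto : tgt pout = 0 := by
        simp only [htgt]
        rw [if_neg]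
        intro hc
        have he : (fun r => O.closed.bag pout (some r))
            = (fun r => O.closed.bag pin (some r)) := hc.trans hbm'.symm
        have hpp : pout = pin := hrinj _ _ hl.symm he
        exact O.closed.no_useless t (by rw [← hin, ← hout, hpp])
      rw [hdot, hti, hto]; norm_num
    · intro hbp
      have hbp' : (fun r => O.closed.bag pout (some r)) = b := restout.symm.trans hbp.symm
      have hto : tgt pout = 1 := by simp only [htgt]; rw [if_pos hbp']
      have hti : tgt pin = 0 := by
        simp only [htgt]
        rw [if_neg]
        intro hc
        have he : (fun r => O.closed.bag pin (some r))
            = (fun r => O.closed.bag pout (some r)) := hc.trans hbp'.symm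
        have hpp : pin = pout := hrinj _ _ hl he
        exact O.closed.no_useless t (by rw [← hin, ← hout, hpp])
      rw [hdot, hti, hto]; norm_num
    · intro hbm hbp
      have hti : tgt pin = 0 := by
        simp only [htgt]
        rw [if_neg]
        intro hc
        exact hbm (restin.trans hc).symm
      have hto : tgt pout = 0 := by
        simp only [htgt]
        rw [if_neg]
        intro hc
        exact hbp (restout.trans hc).symm
      rw [hdot, hti, hto]; norm_num
  -- set up the triangular system
  have hdiagB : ∀ q : P, (O.closed.bag (some q) (some q) : ℚ) = 1 := by
    intro q; rw [O.closed.bag_self (some q)]; norm_num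
  have htriB : ∀ q r : P, r ≠ q → (O.closed.bag (some q) (some r) : ℚ) ≠ 0 →
      O.closed.layer (some r) < O.closed.layer (some q) := by
    intro q r hrq hne
    have hpos : 0 < O.closed.bag (some q) (some r) :=
      Nat.pos_of_ne_zero (fun h0 => hne (by rw [h0]; norm_num))
    have := hres q r hrq hpos
    omega
  obtain ⟨w₀, hw₀⟩ := solve_tri (fun q : P => O.closed.layer (some q))
    (fun q r => (O.closed.bag (some q) (some r) : ℚ)) hdiagB htriB
    (fun q => tgt (some q))
  have hw₀' : ∀ q : P, (∑ r, (O.closed.bag (some q) (some r) : ℚ) * w₀ r)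
      = tgt (some q) := fun q => hw₀ q
  set u : P → ℚ := fun r =>
    if O.closed.layer (some r) + 1 = Nn then 1
    else if O.closed.layer (some r) = Nn then -(O.closed.pot (some r) : ℚ) else 0 with hu_def
  have hu : ∀ q : P, (∑ r, (O.closed.bag (some q) (some r) : ℚ) * u r)
      = if O.closed.layer (some q) + 1 = Nn then 1 else 0 := by
    intro q
    have hsplit : (∑ r, (O.closed.bag (some q) (some r) : ℚ) * u r)
        = (∑ r ∈ Finset.univ.erase q, (O.closed.bag (some q) (some r) : ℚ) * u r)
          + (O.closed.bag (some q) (some q) : ℚ) * u q :=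
      (Finset.sum_erase_add _ _ (Finset.mem_univ q)).symm
    by_cases h1 : O.closed.layer (some q) + 1 = Nn
    · have hz : ∀ r ∈ Finset.univ.erase q,
          (O.closed.bag (some q) (some r) : ℚ) * u r = 0 := by
        intro r hr
        rcases Nat.eq_zero_or_pos (O.closed.bag (some q) (some r)) with h | h
        · rw [h]; norm_num
        · have h2 := hres q r (Finset.ne_of_mem_erase hr) h
          have hle := O.closed.layer_le (some q)
          have hu0 : u r = 0 := by
            simp only [hu_def]
            rw [if_neg (by omega), if_neg (by omega)]
          rw [hu0, mul_zero]
      have huq : u q = 1 := by simp only [hu_def]; rw [if_pos h1]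
      rw [if_pos h1, hsplit, Finset.sum_eq_zero hz, hdiagB q, huq]
      norm_num
    · by_cases h2 : O.closed.layer (some q) = Nn
      · have hs : (∑ r ∈ Finset.univ.erase q, (O.closed.bag (some q) (some r) : ℚ) * u r)
            = ∑ r ∈ Finset.univ.erase q, (O.closed.bag (some q) (some r) : ℚ) := by
          refine Finset.sum_congr rfl (fun r hr => ?_)
          rcases Nat.eq_zero_or_pos (O.closed.bag (some q) (some r)) with h | h
          · rw [h]; norm_num
          · have h3 := hres q r (Finset.ne_of_mem_erase hr) h
            have hur : u r = 1 := by simp only [hu_def]; rw [if_pos (by omega)]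
            rw [hur, mul_one]
        have huq : u q = -(O.closed.pot (some q) : ℚ) := by
          simp only [hu_def]; rw [if_neg h1, if_pos h2]
        rw [if_neg h1, hsplit, hs, hErase q, hdiagB q, huq]
        ring
      · have hz : ∀ r ∈ Finset.univ.erase q,
            (O.closed.bag (some q) (some r) : ℚ) * u r = 0 := by
          intro r hr
          rcases Nat.eq_zero_or_pos (O.closed.bag (some q) (some r)) with h | h
          · rw [h]; norm_num
          · have h3 := hres q r (Finset.ne_of_mem_erase hr) h
            have hle := O.closed.layer_le (some q)
            have hu0 : u r = 0 := by
              simp only [hu_def]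
              rw [if_neg (by omega), if_neg (by omega)]
            rw [hu0, mul_zero]
        have huq : u q = 0 := by simp only [hu_def]; rw [if_neg h1, if_neg h2]
        rw [if_neg h1, hsplit, Finset.sum_eq_zero hz, huq]
        norm_num
  have huv : (∑ r, (O.closed.bag none (some r) : ℚ) * u r) = (O.potExt : ℚ) := by
    have hterm : ∀ r : P, (O.closed.bag none (some r) : ℚ) * u r
        = (O.closed.bag none (some r) : ℚ) := by
      intro r
      rcases Nat.eq_zero_or_pos (O.closed.bag none (some r)) with h | h
      · rw [h]; norm_num
      · have h2 := (O.closed.resource none (some r) (by simp) h).1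
        have h3 : O.closed.layer none = Nn := O.pext_layer
        have hur : u r = 1 := by simp only [hu_def]; rw [if_pos (by omega)]
        rw [hur, mul_one]
    rw [Finset.sum_congr rfl (fun r _ => hterm r), ← hsum_none]
    push_cast
    rfl
  by_cases h0 : O.potExt = 0
  · -- in this case the external place contributes nothing
    have hv0 : ∀ r : P, O.closed.bag none (some r) = 0 := by
      intro r
      have hs := hsum_none
      rw [h0] at hs
      exact (Finset.sum_eq_zero_iff.mp hs) r (Finset.mem_univ r)
    obtain ⟨w, hw⟩ := solve_tri (fun q : P => O.closed.layer (some q))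
      (fun q r => (O.closed.bag (some q) (some r) : ℚ)) hdiagB htriB
      (fun q => tgt (some q) + (if O.closed.layer (some q) = Nn then -tgt none else 0))
    have hw' : ∀ q : P, (∑ r, (O.closed.bag (some q) (some r) : ℚ) * w r)
        = tgt (some q) + (if O.closed.layer (some q) = Nn then -tgt none else 0) :=
      fun q => hw q
    refine ⟨w, final w (fun i => if i = Nn then -tgt none else 0) ?_⟩
    intro p
    cases p with
    | some q =>
      show (∑ r, w r * (O.closed.bag (some q) (some r) : ℚ))
          = tgt (some q) + (if O.closed.layer (some q) = Nn then -tgt none else 0)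
      rw [← hw' q]
      exact Finset.sum_congr rfl (fun r _ => mul_comm _ _)
    | none =>
      show (∑ r, w r * (O.closed.bag none (some r) : ℚ))
          = tgt none + (if O.closed.layer none = Nn then -tgt none else 0)
      have hz : (∑ r, w r * (O.closed.bag none (some r) : ℚ)) = 0 := by
        apply Finset.sum_eq_zero
        intro r _
        rw [hv0 r]
        norm_num
      rw [hz, show O.closed.layer none = Nn from O.pext_layer, if_pos rfl]
      ring
  · -- external potential is positive: correct with a multiple of `u`
    have hpne : (O.potExt : ℚ) ≠ 0 := Nat.cast_ne_zero.mpr h0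
    set F : ℚ := (∑ r, w₀ r * (O.closed.bag none (some r) : ℚ)) - tgt none with hFdef
    set c : ℚ := -F / (O.potExt : ℚ) with hcdef
    set w : P → ℚ := fun r => w₀ r + c * u r with hwdef
    have hwr : ∀ r, w r = w₀ r + c * u r := fun _ => rfl
    refine ⟨w, final w (fun i => if i + 1 = Nn then c else 0) ?_⟩
    intro p
    cases p with
    | some q =>
      show (∑ r, w r * (O.closed.bag (some q) (some r) : ℚ))
          = tgt (some q) + (if O.closed.layer (some q) + 1 = Nn then c else 0)
      calc (∑ r, w r * (O.closed.bag (some q) (some r) : ℚ))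
          = ∑ r, ((O.closed.bag (some q) (some r) : ℚ) * w₀ r
              + c * ((O.closed.bag (some q) (some r) : ℚ) * u r)) := by
            refine Finset.sum_congr rfl (fun r _ => ?_)
            rw [hwr r]; ring
        _ = (∑ r, (O.closed.bag (some q) (some r) : ℚ) * w₀ r)
              + c * ∑ r, (O.closed.bag (some q) (some r) : ℚ) * u r := by
            rw [Finset.sum_add_distrib, Finset.mul_sum]
        _ = tgt (some q) + (if O.closed.layer (some q) + 1 = Nn then c else 0) := by
            rw [hw₀' q, hu q]
            by_cases h1 : O.closed.layer (some q) + 1 = Nn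
            · rw [if_pos h1, if_pos h1]; ring
            · rw [if_neg h1, if_neg h1]; ring
    | none =>
      show (∑ r, w r * (O.closed.bag none (some r) : ℚ))
          = tgt none + (if O.closed.layer none + 1 = Nn then c else 0)
      have h1 : ¬ (O.closed.layer none + 1 = Nn) := by
        rw [show O.closed.layer none = Nn from O.pext_layer]; omega
      rw [if_neg h1]
      calc (∑ r, w r * (O.closed.bag none (some r) : ℚ))
          = (∑ r, w₀ r * (O.closed.bag none (some r) : ℚ))
              + c * ∑ r, (O.closed.bag none (some r) : ℚ) * u r := by
            rw [Finset.mul_sum, ← Finset.sum_add_distrib]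
            refine Finset.sum_congr rfl (fun r _ => ?_)
            rw [hwr r]; ring
        _ = (F + tgt none) + c * (O.potExt : ℚ) := by rw [huv, hFdef]; ring
        _ = tgt none + 0 := by
            have hcp : c * (O.potExt : ℚ) = -F := by
              rw [hcdef, div_mul_cancel₀ _ hpne]
            rw [hcp]; ring
  
end AuxOpen

/-- Every N-layer closed Π³-net and every N-layer open Π³-net is a
Π²-net: every connected component of its bag graph is strongly connected, and
every bag admits a witness. -/
theorem stmt_0 :
    (∀ (P T : Type) [Fintype P] [Fintype T] (Nn : ℕ) (C : ClosedPi3 P T Nn),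
      IsPi2 C.Wm C.Wp) ∧
    (∀ (P T : Type) [Fintype P] [Fintype T] (Nn : ℕ) (O : OpenPi3 P T Nn),
      IsPi2 O.Wm O.Wp) := by
  constructor
  · intro P T _ _ Nn C
    exact ⟨closed_weakRev C, fun b hb => closed_witness C b hb⟩
  · intro P T _ _ Nn O
    exact ⟨open_weakRev O, fun b hb => open_witness O b hb⟩
end

section
/- Let N be an N-layer (open or closed) Π³-net. For every 1≤i≤N−1 and every transition t∈T, v^(i)·W(t)=0; moreover, if the net is closed, then v^(N)·W(t)=0 for every t∈T. -/
open Finset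

/-!
Since `v^(i) · W(t) = v^(i) · W⁺(t) − v^(i) · W⁻(t)` and both bags of `t` lie in the same
layer, it suffices that `v^(i) · b_p` depends only on the layer of `p`. Now `b_p` is `p` itself plus
`pot(p)` tokens on resources, all of them places of maximal potential in the layer below. Hence
`v^(i) · b_p` is `1` on layer `i`, `cin(p) + pot(p) = POT_{i+1}` on layer `i + 1`, and `0`
elsewhere (on layer `i + 2` because `cin` vanishes on `P_{i+1}^max`). This only uses that
`POT_{i+1}` is the closed net's value when layer `i + 2` is inhabited, so it also covers the open
net, viewed as the closed net over `Option P` with the coordinate of `p_ext` set to `0`.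
-/

namespace ClosedPi3

variable {P T : Type} [Fintype P] [Fintype T] {Nn : ℕ} (C : ClosedPi3 P T Nn)

def vvecWith (i : ℕ) (K : ℤ) (q : P) : ℤ :=
  (if C.layer q = i then 1 else 0) + (if C.layer q = i + 1 then K - C.pot q else 0)

lemma pot_eq_POT_of_bag_pos {p q : P} (hqp : q ≠ p) (hpos : 0 < C.bag p q) :
    C.pot q = C.POT (C.layer q) := by
  have hmax := (C.resource p q hqp hpos).2
  refine le_antisymm (Finset.le_sup (by simp [places])) (Finset.sup_le fun r hr => hmax r ?_)
  simpa [places] using hr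

lemma sum_mul_bag_eq (w : P → ℤ) (c : ℤ) (p : P)
    (hc : ∀ q, q ≠ p → 0 < C.bag p q → w q = c) :
    ∑ q, w q * (C.bag p q : ℤ) = w p + c * C.pot p := by
  classical
  have hres : ∀ q ∈ Finset.univ.erase p, w q * (C.bag p q : ℤ) = c * C.bag p q := by
    intro q hq
    rcases Nat.eq_zero_or_pos (C.bag p q) with h | h
    · simp [h]
    · rw [hc q (Finset.ne_of_mem_erase hq) h]
  have hpot : ∑ q ∈ Finset.univ.erase p, C.bag p q = C.pot p := by
    have := Finset.add_sum_erase Finset.univ (C.bag p) (Finset.mem_univ p)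
    rw [C.bag_self p] at this
    simp only [pot, potOf]
    omega
  rw [← Finset.add_sum_erase _ _ (Finset.mem_univ p), Finset.sum_congr rfl hres,
    ← Finset.mul_sum, ← Nat.cast_sum, hpot, C.bag_self p, Nat.cast_one, mul_one]

lemma vvecWith_mul_bag (i : ℕ) (K : ℤ) (hK : ∀ q, C.layer q = i + 2 → K = C.POT (i + 1))
    (p : P) :
    ∑ q, C.vvecWith i K q * (C.bag p q : ℤ) =
      if C.layer p = i then 1 else if C.layer p = i + 1 then K else 0 := by
  by_cases h2 : C.layer p = i + 2
  · rw [C.sum_mul_bag_eq _ 0 p fun q hqp hpos => ?_]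
    · simp [vvecWith, h2]
    have hq : C.layer q = i + 1 := by have := (C.resource p q hqp hpos).1; omega
    simp [vvecWith, hq, C.pot_eq_POT_of_bag_pos hqp hpos, ← hK p h2]
  · rw [C.sum_mul_bag_eq _ (if C.layer p = i + 1 then 1 else 0) p fun q hqp hpos => ?_]
    · unfold vvecWith
      split_ifs <;> omega
    have := (C.resource p q hqp hpos).1
    unfold vvecWith
    split_ifs <;> omega

lemma sum_mul_incidence_eq_zero (w : P → ℤ) (f : ℕ → ℤ)
    (hw : ∀ p, ∑ q, w q * (C.bag p q : ℤ) = f (C.layer p)) (t : T) :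
    ∑ p, w p * ((C.Wp p t : ℤ) - C.Wm p t) = 0 := by
  obtain ⟨pm, hpm⟩ := C.bag_surj _ ⟨t, Or.inl rfl⟩
  obtain ⟨pp, hpp⟩ := C.bag_surj _ ⟨t, Or.inr rfl⟩
  have hlayer : C.layer pm = C.layer pp := C.edge_layer _ _ ⟨t, hpm, hpp⟩
  calc ∑ p, w p * ((C.Wp p t : ℤ) - C.Wm p t)
      = ∑ q, w q * (C.bag pp q : ℤ) - ∑ q, w q * (C.bag pm q : ℤ) := by
        simp only [hpm, hpp, mul_sub, Finset.sum_sub_distrib]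
    _ = 0 := by rw [hw, hw, hlayer, sub_self]

lemma vvecWith_mul_incidence (i : ℕ) (K : ℤ)
    (hK : ∀ q, C.layer q = i + 2 → K = C.POT (i + 1)) (t : T) :
    ∑ p, C.vvecWith i K p * ((C.Wp p t : ℤ) - C.Wm p t) = 0 :=
  C.sum_mul_incidence_eq_zero _ (fun l => if l = i then 1 else if l = i + 1 then K else 0)
    (C.vvecWith_mul_bag i K hK) t

lemma vvec_eq_vvecWith (i : ℕ) : C.vvec i = C.vvecWith i (C.POT (i + 1)) := by
  funext q
  have := C.layer_le q
  by_cases hi : i = Nn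
  · have : C.layer q ≠ Nn + 1 := by omega
    simp [vvec, vvecWith, hi, this]
  · simp only [vvec, vvecWith, cin, hi, if_false]
    split_ifs with h <;> simp_all

theorem vvec_mul_incidence (i : ℕ) (t : T) :
    ∑ p, C.vvec i p * ((C.Wp p t : ℤ) - C.Wm p t) = 0 := by
  rw [vvec_eq_vvecWith]
  exact C.vvecWith_mul_incidence i _ (fun _ _ => rfl) t

end ClosedPi3

namespace OpenPi3

variable {P T : Type} [Fintype P] [Fintype T] {Nn : ℕ} (O : OpenPi3 P T Nn)

lemma POT_eq_closed_POT {i : ℕ} (hi : i ≠ Nn) : O.POT i = O.closed.POT i := by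
  rw [POT, if_neg hi]
  refine le_antisymm (Finset.sup_le fun p hp => ?_) (Finset.sup_le fun q hq => ?_)
  · exact Finset.le_sup (f := O.closed.pot)
      (Finset.mem_filter.2 ⟨Finset.mem_univ _, (Finset.mem_filter.1 hp).2⟩)
  · rcases q with _ | p
    · simp [ClosedPi3.places, O.pext_layer, Ne.symm hi] at hq
    · exact Finset.le_sup (f := O.pot)
        (Finset.mem_filter.2 ⟨Finset.mem_univ _, (Finset.mem_filter.1 hq).2⟩)

lemma vvecWith_none {i : ℕ} (hi : i < Nn) : O.closed.vvecWith i (O.POT (i + 1)) none = 0 := by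
  rcases eq_or_ne (i + 1) Nn with h | h
  · simp [ClosedPi3.vvecWith, O.pext_layer, ← h, POT, potExt]
  · simp [ClosedPi3.vvecWith, O.pext_layer, hi.ne', Ne.symm h]

lemma vvec_eq_vvecWith (i : ℕ) (p : P) :
    O.vvec i p = O.closed.vvecWith i (O.POT (i + 1)) (some p) := by
  unfold vvec ClosedPi3.vvecWith cin layer pot
  split_ifs <;> simp_all

theorem vvec_mul_incidence {i : ℕ} (hi : i < Nn) (t : T) :
    ∑ p, O.vvec i p * ((O.Wp p t : ℤ) - O.Wm p t) = 0 := by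
  have hK : ∀ q, O.closed.layer q = i + 2 → (O.POT (i + 1) : ℤ) = O.closed.POT (i + 1) := by
    intro q hq
    have := O.closed.layer_le q
    exact_mod_cast O.POT_eq_closed_POT (by omega)
  rw [← O.closed.vvecWith_mul_incidence i _ hK t, Fintype.sum_option, O.vvecWith_none hi,
    zero_mul, zero_add]
  simp only [vvec_eq_vvecWith, Wp, Wm]

end OpenPi3

/-- The vectors `v^(i)` (for `1 ≤ i ≤ N−1`, and also `v^(N)` in the
closed case) are linear invariants: `v^(i) · W(t) = 0` for every transition. -/
theorem stmt_2 :
    (∀ (P T : Type) [Fintype P] [Fintype T] (Nn : ℕ) (C : ClosedPi3 P T Nn),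
      ∀ i ∈ Finset.Icc 1 Nn, ∀ t : T,
        ∑ p, C.vvec i p * ((C.Wp p t : ℤ) - (C.Wm p t : ℤ)) = 0) ∧
    (∀ (P T : Type) [Fintype P] [Fintype T] (Nn : ℕ) (O : OpenPi3 P T Nn),
      ∀ i ∈ Finset.Icc 1 (Nn - 1), ∀ t : T,
        ∑ p, O.vvec i p * ((O.Wp p t : ℤ) - (O.Wm p t : ℤ)) = 0) :=
  ⟨fun _ _ _ _ _ C i _ t => C.vvec_mul_incidence i t,
   fun _ _ _ _ _ O i hi t => O.vvec_mul_incidence (by simp at hi; omega) t⟩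
end

section
/- Let (N,m0) be a marked N-layer closed Π³-net. Then for every m∈R(m0), ‖m‖ ≤ Σ_{i=1}^N C_i^{m0}; in particular, (N,m0) is bounded. -/
open Finset

namespace ClosedPi3

variable {P T : Type} [Fintype P] [Fintype T] {Nn : ℕ} (C : ClosedPi3 P T Nn)

noncomputable local instance : DecidableEq P := Classical.decEq P

lemma pot_le_POT' (p : P) : C.pot p ≤ C.POT (C.layer p) :=
  Finset.le_sup (by simp [places])

lemma cin_nonneg' (p : P) : 0 ≤ C.cin p := by
  have := C.pot_le_POT' p
  simp only [cin, sub_nonneg]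
  exact_mod_cast this

lemma cin_eq_zero_of_max' (q : P)
    (h : ∀ r, C.layer r = C.layer q → C.pot r ≤ C.pot q) : C.cin q = 0 := by
  have h1 : C.POT (C.layer q) ≤ C.pot q :=
    Finset.sup_le (fun r hr => h r (by simpa [places] using hr))
  have h2 := C.pot_le_POT' q
  have : C.POT (C.layer q) = C.pot q := le_antisymm h1 h2
  simp [cin, this]

lemma pot_sum' (p : P) : C.pot p = ∑ q ∈ Finset.univ.erase p, C.bag p q := by
  classical
  have h : C.bag p p + ∑ q ∈ Finset.univ.erase p, C.bag p q = ∑ q, C.bag p q :=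
    Finset.add_sum_erase _ (fun q => C.bag p q) (Finset.mem_univ p)
  simp only [pot, potOf, ← h, C.bag_self p]
  omega

lemma bval_bag' (i : ℕ) (p : P) :
    (∑ q, C.vvec i q * (C.bag p q : ℤ)) =
      if C.layer p = i then 1
      else if i ≠ Nn ∧ C.layer p = i + 1 then (C.POT (i+1) : ℤ) else 0 := by
  classical
  have hsplit : C.vvec i p * (C.bag p p : ℤ)
        + ∑ q ∈ Finset.univ.erase p, C.vvec i q * (C.bag p q : ℤ)
      = (∑ q, C.vvec i q * (C.bag p q : ℤ)) :=
    Finset.add_sum_erase _ (fun q => C.vvec i q * (C.bag p q : ℤ)) (Finset.mem_univ p)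
  have hrest : ∀ q ∈ Finset.univ.erase p,
      C.vvec i q * (C.bag p q : ℤ)
        = (if C.layer p = i + 1 then (1:ℤ) else 0) * (C.bag p q : ℤ) := by
    intro q hq
    have hqp : q ≠ p := Finset.ne_of_mem_erase hq
    rcases Nat.eq_zero_or_pos (C.bag p q) with h0 | h0
    · simp [h0]
    · obtain ⟨hl, hmax⟩ := C.resource p q hqp h0
      have hcin : C.cin q = 0 := C.cin_eq_zero_of_max' q hmax
      have hiff : (C.layer q = i) ↔ (C.layer p = i + 1) := by omega
      have hv : C.vvec i q = if C.layer p = i + 1 then (1:ℤ) else 0 := by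
        by_cases hN : i = Nn
        · subst hN
          have h1 : C.layer q ≠ i := by have := C.layer_le p; omega
          have h2 : C.layer p ≠ i + 1 := by have := C.layer_le p; omega
          simp [vvec, h1, h2]
        · simp only [vvec, if_neg hN, hcin, ite_self, add_zero, hiff]
      rw [hv]
  rw [← hsplit, Finset.sum_congr rfl hrest, ← Finset.mul_sum]
  have hps : (∑ q ∈ Finset.univ.erase p, (C.bag p q : ℤ)) = (C.pot p : ℤ) := by
    rw [C.pot_sum' p]
    push_cast
    rfl
  rw [hps, C.bag_self p]
  by_cases hN : i = Nn
  · subst hN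
    have h2 : C.layer p ≠ i + 1 := by have := C.layer_le p; omega
    simp [vvec, h2]
  · have hv : C.vvec i p = (if C.layer p = i then (1:ℤ) else 0)
        + (if C.layer p = i + 1 then C.cin p else 0) := by simp [vvec, hN]
    rw [hv]
    by_cases h1 : C.layer p = i
    · have h2 : C.layer p ≠ i + 1 := by omega
      simp [h1, h2]
    · by_cases h2 : C.layer p = i + 1
      · have hc : C.cin p = (C.POT (i+1) : ℤ) - (C.pot p : ℤ) := by rw [cin, h2]
        simp only [if_neg h1, if_pos h2, hc,
          if_pos (show (i ≠ Nn ∧ C.layer p = i + 1) from ⟨hN, h2⟩)]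
        push_cast
        ring
      · simp [h1, h2]

lemma vdot_step' (i : ℕ) {m m' : P → ℕ} (h : Step C.Wm C.Wp m m') :
    C.vdot i m' = C.vdot i m := by
  obtain ⟨t, ht, rfl⟩ := h
  obtain ⟨pm, hpm⟩ := C.bag_surj (fun q => C.Wm q t) ⟨t, Or.inl rfl⟩
  obtain ⟨pp, hpp⟩ := C.bag_surj (fun q => C.Wp q t) ⟨t, Or.inr rfl⟩
  have hl : C.layer pm = C.layer pp := C.edge_layer pm pp ⟨t, hpm, hpp⟩
  have h1 : (∑ q, C.vvec i q * (C.Wm q t : ℤ)) = ∑ q, C.vvec i q * (C.Wp q t : ℤ) := by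
    have e1 := C.bval_bag' i pm
    have e2 := C.bval_bag' i pp
    simp only [hpm] at e1; simp only [hpp] at e2
    rw [e1, e2, hl]
  have hcast : ∀ p, ((m p - C.Wm p t + C.Wp p t : ℕ) : ℤ)
      = (m p : ℤ) - (C.Wm p t : ℤ) + (C.Wp p t : ℤ) := by
    intro p; have := ht p; omega
  unfold vdot Fire
  calc (∑ p, C.vvec i p * ((m p - C.Wm p t + C.Wp p t : ℕ) : ℤ))
      = ∑ p, (C.vvec i p * (m p : ℤ) - C.vvec i p * (C.Wm p t : ℤ)
          + C.vvec i p * (C.Wp p t : ℤ)) := by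
        apply Finset.sum_congr rfl; intro p _; rw [hcast p]; ring
    _ = (∑ p, C.vvec i p * (m p : ℤ)) - (∑ p, C.vvec i p * (C.Wm p t : ℤ))
          + ∑ p, C.vvec i p * (C.Wp p t : ℤ) := by
        rw [Finset.sum_add_distrib, Finset.sum_sub_distrib]
    _ = ∑ p, C.vvec i p * (m p : ℤ) := by rw [h1]; ring

lemma vdot_reach' (i : ℕ) {m0 m : P → ℕ} (h : Reach C.Wm C.Wp m0 m) :
    C.vdot i m = C.vdot i m0 := by
  induction h with
  | refl => rfl
  | tail _ hstep ih => rw [C.vdot_step' i hstep, ih]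

lemma vvec_nonneg' (i : ℕ) (p : P) : 0 ≤ C.vvec i p := by
  by_cases h : i = Nn
  · have hv : C.vvec i p = if C.layer p = Nn then 1 else 0 := by simp [vvec, h]
    rw [hv]; split_ifs <;> omega
  · have hv : C.vvec i p = (if C.layer p = i then (1:ℤ) else 0)
        + (if C.layer p = i + 1 then C.cin p else 0) := by simp [vvec, h]
    have hc := C.cin_nonneg' p
    rw [hv]; split_ifs <;> omega

lemma one_le_sum_vvec' (p : P) : (1:ℤ) ≤ ∑ i ∈ Finset.Icc 1 Nn, C.vvec i p := by
  have hj1 := C.layer_pos p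
  have hj2 := C.layer_le p
  have hmem : C.layer p ∈ Finset.Icc 1 Nn := Finset.mem_Icc.mpr ⟨hj1, hj2⟩
  have hval : C.vvec (C.layer p) p = 1 := by
    by_cases h : C.layer p = Nn
    · simp [vvec, h]
    · have h2 : C.layer p ≠ C.layer p + 1 := by omega
      simp [vvec, h, h2]
  calc (1:ℤ) = C.vvec (C.layer p) p := hval.symm
    _ ≤ ∑ i ∈ Finset.Icc 1 Nn, C.vvec i p :=
        Finset.single_le_sum (fun i _ => C.vvec_nonneg' i p) hmem

end ClosedPi3

/-- In a marked N-layer closed Π³-net, every reachable marking `m`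
satisfies `‖m‖ ≤ Σ_{i=1}^N C_i^{m0}`; in particular, the net is bounded. -/
theorem stmt_5 (P T : Type) [Fintype P] [Fintype T] (Nn : ℕ)
    (C : ClosedPi3 P T Nn) (m0 : P → ℕ) :
    (∀ m : P → ℕ, Reach C.Wm C.Wp m0 m →
      (∑ p, (m p : ℤ)) ≤ ∑ i ∈ Finset.Icc 1 Nn, C.vdot i m0) ∧
    (∃ B : ℕ, ∀ m : P → ℕ, Reach C.Wm C.Wp m0 m → ∑ p, m p ≤ B) := by
  have key : ∀ m : P → ℕ, Reach C.Wm C.Wp m0 m →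
      (∑ p, (m p : ℤ)) ≤ ∑ i ∈ Finset.Icc 1 Nn, C.vdot i m0 := by
    intro m hm
    have h1 : (∑ p, (m p : ℤ))
        ≤ ∑ p, (∑ i ∈ Finset.Icc 1 Nn, C.vvec i p) * (m p : ℤ) := by
      apply Finset.sum_le_sum
      intro p _
      have h2 := C.one_le_sum_vvec' p
      have h3 : (0:ℤ) ≤ (m p : ℤ) := Int.ofNat_nonneg _
      nlinarith
    have h4 : (∑ p, (∑ i ∈ Finset.Icc 1 Nn, C.vvec i p) * (m p : ℤ))
        = ∑ i ∈ Finset.Icc 1 Nn, C.vdot i m := by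
      simp only [ClosedPi3.vdot, Finset.sum_mul]
      rw [Finset.sum_comm]
    have h5 : ∀ i ∈ Finset.Icc 1 Nn, C.vdot i m = C.vdot i m0 :=
      fun i _ => C.vdot_reach' i hm
    calc (∑ p, (m p : ℤ)) ≤ ∑ i ∈ Finset.Icc 1 Nn, C.vdot i m := by rw [← h4]; exact h1
      _ = ∑ i ∈ Finset.Icc 1 Nn, C.vdot i m0 := Finset.sum_congr rfl h5
  refine ⟨key, ⟨(∑ i ∈ Finset.Icc 1 Nn, C.vdot i m0).toNat, ?_⟩⟩
  intro m hm
  have h1 := key m hm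
  have h2 : ((∑ p, m p : ℕ) : ℤ) ≤ ((∑ i ∈ Finset.Icc 1 Nn, C.vdot i m0).toNat : ℤ) := by
    push_cast
    exact h1.trans (Int.self_le_toNat _)
  exact_mod_cast h2
end

section
/- Let (N,m0) be a live marked N-layer open Π³-net. Then (N,m0) is bounded if and only if cin(q)>0 for every q∈P_N; moreover, when this condition holds, ‖m‖ ≤ Σ_{i=1}^{N−1} C_i^{m0} for every m∈R(m0). -/
open Finset

/-!
The vectors `v^(i)` are place invariants. A bag of layer `i` contributes `1` to `m · v^(i)`, a bag
of layer `i + 1` contributes `POT_{i+1}` (its own `cin` plus its resources, which lie in layer `i`),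
and both bags of a transition lie in the same layer. If `cin(q) > 0` on `P_N`, every place has
weight at least `1` in `∑ v^(i)`, which gives the bound.

Conversely, let `pot(q) ≥ pot(p_ext)` for some `q ∈ P_N`. By liveness, the tokens of layer `j`
always suffice to rebuild the bag of a marked place of least potential in layer `j + 1`. By
induction on the layer, any demand on the places of maximal potential of a layer can therefore be
met from the tokens of that layer without disturbing the layers above it. Trading the bag of
`p_ext` for that of `q` adds a token to `q` and leaves `pot(q) ≥ pot(p_ext)` tokens in layer
`N − 1`, from which the bag of `p_ext` is rebuilt; repeating this pumps unboundedly many tokens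
into `q`.
-/

lemma sum_tsub_add {ι : Type*} (s : Finset ι) {m f g : ι → ℕ} (h : f ≤ m) :
    ∑ p ∈ s, (m - f + g) p + ∑ p ∈ s, f p = ∑ p ∈ s, m p + ∑ p ∈ s, g p := by
  rw [← Finset.sum_add_distrib, ← Finset.sum_add_distrib]
  refine Finset.sum_congr rfl fun p _ => ?_
  have : f p ≤ m p := h p
  simp only [Pi.add_apply, Pi.sub_apply]
  omega

namespace ClosedPi3

variable {P T : Type} [Fintype P] [Fintype T] {Nn : ℕ} (C : ClosedPi3 P T Nn)

lemma sum_bag_eq_one_add_pot (c : P) : ∑ q, C.bag c q = 1 + C.pot c := by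
  have h := Finset.single_le_sum (f := C.bag c) (fun q _ => Nat.zero_le _) (mem_univ c)
  rw [C.bag_self] at h
  unfold pot potOf
  omega

lemma layer_succ_of_bag_ne_zero {c q : P} (hqc : q ≠ c) (h : C.bag c q ≠ 0) :
    C.layer q + 1 = C.layer c :=
  (C.resource c q hqc (Nat.pos_of_ne_zero h)).1

lemma sum_bag_places (c : P) (i : ℕ) :
    ∑ q ∈ C.places i, C.bag c q =
      (if C.layer c = i then 1 else 0) + (if C.layer c = i + 1 then C.pot c else 0) := by
  have hmem : ∀ {q}, q ∈ C.places i ↔ C.layer q = i := by simp [places]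
  by_cases hi : C.layer c = i
  · rw [if_pos hi, if_neg (by omega), add_zero, Finset.sum_eq_single c]
    · exact C.bag_self c
    · intro q hq hqc
      by_contra h
      have := C.layer_succ_of_bag_ne_zero hqc h
      rw [hmem.mp hq] at this
      omega
    · exact fun h => absurd (hmem.mpr hi) h
  rw [if_neg hi, zero_add]
  split_ifs with hi1
  · have hout : ∑ q ∈ univ.filter (fun q => ¬ C.layer q = i), C.bag c q = 1 := by
      rw [Finset.sum_eq_single c]
      · exact C.bag_self c
      · intro q hq hqc
        by_contra h
        have := C.layer_succ_of_bag_ne_zero hqc h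
        simp only [mem_filter, mem_univ, true_and] at hq
        omega
      · simp [hi]
    have hsplit := Finset.sum_filter_add_sum_filter_not univ (fun q => C.layer q = i) (C.bag c)
    have := C.sum_bag_eq_one_add_pot c
    rw [places]
    omega
  · refine Finset.sum_eq_zero fun q hq => ?_
    by_contra h
    have hqc : q ≠ c := fun e => hi (e ▸ hmem.mp hq)
    have := C.layer_succ_of_bag_ne_zero hqc h
    rw [hmem.mp hq] at this
    exact hi1 this.symm

end ClosedPi3

namespace OpenPi3

variable {P T : Type} [Fintype P] [Fintype T] {Nn : ℕ} (O : OpenPi3 P T Nn)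

def bag (c : Option P) : P → ℕ := fun p => O.closed.bag c (some p)

@[simp] lemma closed_layer_some (p : P) : O.closed.layer (some p) = O.layer p := rfl

@[simp] lemma closed_pot_some (p : P) : O.closed.pot (some p) = O.pot p := rfl

lemma mem_places {p : P} {i : ℕ} : p ∈ O.places i ↔ O.layer p = i := by
  simp [places]

lemma sum_places_eq_sum_closed_places {i : ℕ} (hi : i ≠ Nn) (f : Option P → ℕ) :
    ∑ p ∈ O.places i, f (some p) = ∑ q ∈ O.closed.places i, f q := by
  simp only [places, ClosedPi3.places, Finset.sum_filter, Fintype.sum_option, O.pext_layer,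
    if_neg (Ne.symm hi), zero_add]
  rfl

lemma sum_bag_places {i : ℕ} (hi : i < Nn) (c : Option P) :
    ∑ p ∈ O.places i, O.bag c p = (if O.closed.layer c = i then 1 else 0) +
      (if O.closed.layer c = i + 1 then O.closed.pot c else 0) := by
  rw [← O.closed.sum_bag_places]
  exact O.sum_places_eq_sum_closed_places hi.ne (O.closed.bag c)

@[simp] lemma bag_self (p : P) : O.bag (some p) p = 1 := O.closed.bag_self _

lemma bag_eq_zero_of_ne {c : Option P} {p : P} (hpc : some p ≠ c)
    (hl : O.layer p + 1 ≠ O.closed.layer c) : O.bag c p = 0 := by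
  by_contra hne
  exact hl (O.closed.layer_succ_of_bag_ne_zero hpc hne)

lemma POT_eq_pot_of_isMax {p : P} (hp : O.layer p ≠ Nn)
    (hmax : ∀ r, O.closed.layer r = O.layer p → O.closed.pot r ≤ O.closed.pot (some p)) :
    O.POT (O.layer p) = O.pot p := by
  rw [POT, if_neg hp]
  exact le_antisymm (Finset.sup_le fun r hr => hmax (some r) (O.mem_places.mp hr))
    (Finset.le_sup (O.mem_places.mpr rfl))

lemma mem_placesMax_of_bag_ne_zero {c : Option P} {p : P} (hpc : some p ≠ c)
    (h : O.bag c p ≠ 0) : O.layer p + 1 = O.closed.layer c ∧ p ∈ O.placesMax (O.layer p) := by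
  obtain ⟨hl, hmax⟩ := O.closed.resource c (some p) hpc (Nat.pos_of_ne_zero h)
  have hp : O.layer p ≠ Nn := by
    have := O.closed.layer_le c
    unfold layer
    omega
  refine ⟨hl, Finset.mem_filter.mpr ⟨O.mem_places.mpr rfl, ?_⟩⟩
  exact (O.POT_eq_pot_of_isMax hp hmax).symm

lemma pot_le_POT {p : P} (hp : O.layer p ≠ Nn) : O.pot p ≤ O.POT (O.layer p) := by
  rw [POT, if_neg hp]
  exact Finset.le_sup (O.mem_places.mpr rfl)

lemma pot_le_of_mem_placesMax {j : ℕ} (hj : j ≠ Nn) {p q : P} (hp : O.layer p = j)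
    (hq : q ∈ O.placesMax j) : O.pot p ≤ O.pot q := by
  have := O.pot_le_POT (hp ▸ hj : O.layer p ≠ Nn)
  rw [hp] at this
  exact this.trans_eq (Finset.mem_filter.mp hq).2.symm

lemma layer_of_mem_placesMax {j : ℕ} {p : P} (hp : p ∈ O.placesMax j) : O.layer p = j :=
  O.mem_places.mp (Finset.mem_filter.mp hp).1

lemma bag_eq_Wm {a : Option P} {t : T} (ha : O.closed.bag a = fun q => O.closed.Wm q t) :
    O.bag a = fun p => O.Wm p t :=
  funext fun p => congrFun ha (some p)

lemma bag_eq_Wp {b : Option P} {t : T} (hb : O.closed.bag b = fun q => O.closed.Wp q t) :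
    O.bag b = fun p => O.Wp p t :=
  funext fun p => congrFun hb (some p)

lemma step_of_bagEdge {a b : Option P} {m : P → ℕ}
    (h : BagEdge O.closed.Wm O.closed.Wp (O.closed.bag a) (O.closed.bag b)) (hm : O.bag a ≤ m) :
    Step O.Wm O.Wp m (m - O.bag a + O.bag b) := by
  obtain ⟨t, ha, hb⟩ := h
  rw [O.bag_eq_Wm ha] at hm ⊢
  rw [O.bag_eq_Wp hb]
  exact ⟨t, hm, rfl⟩

lemma exists_bags_of_step {m m' : P → ℕ} (h : Step O.Wm O.Wp m m') :
    ∃ a b, O.closed.layer a = O.closed.layer b ∧ O.bag a ≤ m ∧ m' = m - O.bag a + O.bag b := by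
  obtain ⟨t, hen, rfl⟩ := h
  obtain ⟨a, ha⟩ := O.closed.bag_surj _ ⟨t, Or.inl rfl⟩
  obtain ⟨b, hb⟩ := O.closed.bag_surj _ ⟨t, Or.inr rfl⟩
  refine ⟨a, b, O.closed.edge_layer a b ⟨t, ha, hb⟩, ?_, ?_⟩
  · rw [O.bag_eq_Wm ha]
    exact hen
  · rw [O.bag_eq_Wm ha, O.bag_eq_Wp hb]
    rfl

lemma reach_of_layer_eq {a b : Option P} (hab : O.closed.layer a = O.closed.layer b)
    {m : P → ℕ} (hm : O.bag a ≤ m) : Reach O.Wm O.Wp m (m - O.bag a + O.bag b) := by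
  suffices ∀ x, Relation.ReflTransGen (BagEdge O.closed.Wm O.closed.Wp) x (O.closed.bag b) →
      ∀ a, O.closed.bag a = x → ∀ m, O.bag a ≤ m → Reach O.Wm O.Wp m (m - O.bag a + O.bag b) from
    this _ (O.closed.layer_conn a b hab) a rfl m hm
  intro x hx
  induction hx using Relation.ReflTransGen.head_induction_on with
  | refl =>
    intro a ha m hm
    obtain rfl := O.closed.bag_inj ha
    rw [tsub_add_cancel_of_le hm]
    exact Relation.ReflTransGen.refl
  | head hedge _ ih =>
    intro a ha m hm
    have ⟨t, _, hy⟩ := hedge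
    obtain ⟨c, rfl⟩ := O.closed.bag_surj _ ⟨t, Or.inr hy⟩
    subst ha
    have hrest := ih c rfl (m - O.bag a + O.bag c) le_add_self
    rw [add_tsub_cancel_right] at hrest
    exact Relation.ReflTransGen.head (O.step_of_bagEdge hedge hm) hrest

lemma exists_transition_from (c : Option P) :
    ∃ t, O.closed.bag c = fun q => O.closed.Wm q t := by
  obtain ⟨t, h | h⟩ := O.closed.bag_isBag c
  · exact ⟨t, h⟩
  obtain ⟨a, ha⟩ := O.closed.bag_surj _ ⟨t, Or.inl rfl⟩
  have hlay := O.closed.edge_layer a c ⟨t, ha, h⟩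
  rcases Relation.ReflTransGen.cases_head (O.closed.layer_conn c a hlay.symm) with
    heq | ⟨_, ⟨t', ht', _⟩, _⟩
  · exact absurd (ha.symm.trans (heq ▸ h)) (O.closed.no_useless t)
  · exact ⟨t', ht'⟩

lemma cin_nonneg {p : P} (hp : O.layer p ≠ Nn) : 0 ≤ O.cin p := by
  have := O.pot_le_POT hp
  unfold cin
  omega

lemma cin_mul_bag_of_ne {c : Option P} {p : P} (hpc : some p ≠ c) :
    O.cin p * O.bag c p = 0 := by
  by_cases h : O.bag c p = 0
  · simp [h]
  have hmax := (Finset.mem_filter.mp (O.mem_placesMax_of_bag_ne_zero hpc h).2).2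
  simp [cin, hmax]

lemma sum_vvec_mul (i : ℕ) (x : P → ℤ) :
    ∑ p, O.vvec i p * x p = ∑ p ∈ O.places i, x p + ∑ p ∈ O.places (i + 1), O.cin p * x p := by
  simp only [vvec, add_mul, ite_mul, one_mul, zero_mul, Finset.sum_add_distrib, places,
    Finset.sum_filter]

lemma sum_vvec_mul_bag {i : ℕ} (hi : i + 1 ≤ Nn) (c : Option P) :
    ∑ p, O.vvec i p * (O.bag c p : ℤ) = if O.closed.layer c = i then 1
      else if O.closed.layer c = i + 1 then (O.POT (i + 1) : ℤ) else 0 := by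
  rw [sum_vvec_mul, ← Nat.cast_sum, O.sum_bag_places (by omega)]
  rcases c with _ | c
  · rw [Finset.sum_eq_zero fun p _ => O.cin_mul_bag_of_ne (Option.some_ne_none p), O.pext_layer]
    have hPOT : O.POT Nn = O.closed.pot none := if_pos rfl
    rcases hi.lt_or_eq with hlt | rfl
    · simp [hlt.ne', show Nn ≠ i by omega]
    · simp [hPOT]
  · have hcin : ∑ p ∈ O.places (i + 1), O.cin p * (O.bag (some c) p : ℤ) =
        if O.layer c = i + 1 then O.cin c else 0 := by
      split_ifs with hc
      · rw [Finset.sum_eq_single c (fun p _ hpc => O.cin_mul_bag_of_ne (by simpa using hpc))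
          (fun h => absurd (O.mem_places.mpr hc) h)]
        simp
      · exact Finset.sum_eq_zero fun p hp =>
          O.cin_mul_bag_of_ne fun hpc => hc (Option.some_injective _ hpc ▸ O.mem_places.mp hp)
    simp only [hcin, closed_layer_some, closed_pot_some]
    by_cases h1 : O.layer c = i <;> by_cases h2 : O.layer c = i + 1 <;> simp [h1, h2, cin]

lemma vdot_eq_of_reach {i : ℕ} (hi : i + 1 ≤ Nn) {m m' : P → ℕ} (h : Reach O.Wm O.Wp m m') :
    O.vdot i m' = O.vdot i m := by
  induction h with
  | refl => rfl
  | @tail m₁ _ _ hs ih =>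
    obtain ⟨a, b, hab, ha, rfl⟩ := O.exists_bags_of_step hs
    rw [← ih]
    have hcast : ∀ p, (((m₁ - O.bag a + O.bag b) p : ℕ) : ℤ) = m₁ p - O.bag a p + O.bag b p :=
      fun p => by have : O.bag a p ≤ m₁ p := ha p; simp only [Pi.add_apply, Pi.sub_apply]; omega
    simp only [vdot, hcast, mul_add, mul_sub, Finset.sum_add_distrib, Finset.sum_sub_distrib,
      O.sum_vvec_mul_bag hi, hab, sub_add_cancel]

lemma places_zero : O.places 0 = ∅ :=
  Finset.filter_false_of_mem fun p _ => Nat.pos_iff_ne_zero.mp (O.closed.layer_pos (some p))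

lemma potExt_eq_sum_bag : O.potExt = ∑ p ∈ O.places (Nn - 1), O.bag none p := by
  have h1 := O.closed.layer_pos none
  rw [O.pext_layer] at h1
  rw [O.sum_bag_places (by omega), O.pext_layer, if_neg (by omega), if_pos (by omega), zero_add]
  rfl

lemma two_le_of_cin_pos {q : P} (hq : O.layer q = Nn) (h : 0 < O.cin q) : 2 ≤ Nn := by
  have h1 := O.closed.layer_pos (some q)
  by_contra hlt
  have hNn : Nn - 1 = 0 := by simp at h1; omega
  rw [cin, hq, POT, if_pos rfl, O.potExt_eq_sum_bag, hNn, O.places_zero] at h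
  norm_num at h
  omega

lemma one_le_sum_vvec (hcin : ∀ q ∈ O.places Nn, 0 < O.cin q) (p : P) :
    1 ≤ ∑ i ∈ Finset.Icc 1 (Nn - 1), O.vvec i p := by
  have hcin_nonneg : 0 ≤ O.cin p := by
    by_cases hp : O.layer p = Nn
    · exact (hcin p (O.mem_places.mpr hp)).le
    · exact O.cin_nonneg hp
  have hnonneg : ∀ i ∈ Finset.Icc 1 (Nn - 1), 0 ≤ O.vvec i p := fun i _ => by
    unfold vvec
    split_ifs <;> omega
  have hl := O.closed.layer_pos (some p)
  have hle := O.closed.layer_le (some p)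
  simp only [closed_layer_some] at hl hle
  obtain ⟨i, hi, h1⟩ : ∃ i ∈ Finset.Icc 1 (Nn - 1), 1 ≤ O.vvec i p := by
    by_cases hp : O.layer p = Nn
    · have hcinp := hcin p (O.mem_places.mpr hp)
      have := O.two_le_of_cin_pos hp hcinp
      refine ⟨Nn - 1, Finset.mem_Icc.mpr ⟨by omega, le_rfl⟩, ?_⟩
      simp only [vvec, if_neg (show O.layer p ≠ Nn - 1 by omega),
        if_pos (show O.layer p = Nn - 1 + 1 by omega)]
      omega
    · refine ⟨O.layer p, Finset.mem_Icc.mpr ⟨hl, by omega⟩, ?_⟩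
      simp [vvec]
  exact h1.trans (Finset.single_le_sum hnonneg hi)

lemma sum_le_sum_vdot (hcin : ∀ q ∈ O.places Nn, 0 < O.cin q) {m0 m : P → ℕ}
    (h : Reach O.Wm O.Wp m0 m) : ∑ p, (m p : ℤ) ≤ ∑ i ∈ Finset.Icc 1 (Nn - 1), O.vdot i m0 :=
  calc ∑ p, (m p : ℤ)
      ≤ ∑ p, (∑ i ∈ Finset.Icc 1 (Nn - 1), O.vvec i p) * m p :=
        Finset.sum_le_sum fun p _ =>
          le_mul_of_one_le_left (by positivity) (O.one_le_sum_vvec hcin p)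
    _ = ∑ i ∈ Finset.Icc 1 (Nn - 1), O.vdot i m := by
        simp only [vdot, Finset.sum_mul]
        exact Finset.sum_comm
    _ = ∑ i ∈ Finset.Icc 1 (Nn - 1), O.vdot i m0 :=
        Finset.sum_congr rfl fun i hi => O.vdot_eq_of_reach (by simp at hi; omega) h

/-- If the inequality failed, the marking would stay forever in the trap where layer `j` holds
fewer than `O.pot c` tokens and every marked place of layer `j + 1` has potential at least
`O.pot c`: no transition of layer `j + 1` is enabled there, and the other layers can only add
tokens of maximal potential to layer `j + 1`. Liveness forbids such a trap. -/
lemma pot_le_sum_places_of_le_marked {m0 : P → ℕ} (hlive : LiveMarked O.Wm O.Wp m0)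
    {m : P → ℕ} (hm : Reach O.Wm O.Wp m0 m) {j : ℕ} (hj : j + 1 < Nn) {c : P}
    (hc : O.layer c = j + 1) (hmin : ∀ c', O.layer c' = j + 1 → 0 < m c' → O.pot c ≤ O.pot c') :
    O.pot c ≤ ∑ p ∈ O.places j, m p := by
  by_contra! hlt
  set Stuck : (P → ℕ) → Prop := fun m' => ∑ p ∈ O.places j, m' p < O.pot c ∧
      ∀ c', O.layer c' = j + 1 → 0 < m' c' → O.pot c ≤ O.pot c'
  have blocked : ∀ m' a, Stuck m' → O.closed.layer a = j + 1 → ¬ O.bag a ≤ m' := by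
    rintro m' (_ | a) ⟨hsum, hpot⟩ ha hle
    · rw [O.pext_layer] at ha
      omega
    · have hbag := O.sum_bag_places (i := j) (by omega) (some a)
      rw [if_neg (by omega), if_pos ha, zero_add] at hbag
      have h1 : ∑ p ∈ O.places j, O.bag (some a) p ≤ ∑ p ∈ O.places j, m' p :=
        Finset.sum_le_sum fun p _ => hle p
      have h2 := hpot a ha (lt_of_lt_of_le (by simp) (hle a))
      simp only [closed_pot_some] at hbag
      omega
  have preserved : ∀ m₁ m₂, Step O.Wm O.Wp m₁ m₂ → Stuck m₁ → Stuck m₂ := by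
    intro m₁ m₂ hs hst
    obtain ⟨a, b, hab, ha, rfl⟩ := O.exists_bags_of_step hs
    have haj : O.closed.layer a ≠ j + 1 := fun h => blocked m₁ a hst h ha
    refine ⟨?_, fun c' hc' hpos => ?_⟩
    · have := sum_tsub_add (O.places j) (g := O.bag b) ha
      rw [O.sum_bag_places (by omega) a, O.sum_bag_places (by omega) b, ← hab] at this
      simp only [if_neg haj] at this
      have h1 : ∑ p ∈ O.places j, m₁ p < O.pot c := hst.1
      omega
    · by_cases h : 0 < m₁ c'
      · exact hst.2 c' hc' h
      have hb : O.bag b c' ≠ 0 := by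
        simp only [Pi.add_apply, Pi.sub_apply] at hpos
        omega
      have hmax := (O.mem_placesMax_of_bag_ne_zero
        (fun e => haj (by rw [hab, ← e]; exact hc')) hb).2
      rw [hc'] at hmax
      exact O.pot_le_of_mem_placesMax (by omega) hc hmax
  have stuck : ∀ m', Reach O.Wm O.Wp m m' → Stuck m' := fun m' h => by
    induction h with
    | refl => exact ⟨hlt, hmin⟩
    | tail _ hs ih => exact preserved _ _ hs ih
  obtain ⟨d, hd⟩ := O.closed.layer_surj (j + 1) (by omega) hj.le
  obtain ⟨t, ht⟩ := O.exists_transition_from d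
  obtain ⟨m', hm', hen⟩ := hlive t m hm
  exact blocked m' d (stuck m' hm') hd (O.bag_eq_Wm ht ▸ hen)

def CanCover (m0 : P → ℕ) (j : ℕ) : Prop :=
  ∀ m τ : P → ℕ, Reach O.Wm O.Wp m0 m → (∀ p, τ p ≠ 0 → p ∈ O.placesMax j) →
    ∑ p ∈ O.places j, τ p ≤ ∑ p ∈ O.places j, m p →
    ∃ m', Reach O.Wm O.Wp m m' ∧ (∀ p, j < O.layer p → m' p = m p) ∧ τ ≤ m'

lemma canCover_zero (m0 : P → ℕ) : O.CanCover m0 0 := by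
  intro m τ _ hτ _
  refine ⟨m, .refl, fun _ _ => rfl, fun p => ?_⟩
  by_contra h
  have := O.layer_of_mem_placesMax (hτ p fun h0 => h (h0 ▸ Nat.zero_le _))
  have := O.closed.layer_pos (some p)
  simp_all

/-- A token on `a` is shifted to `b` by first covering the lower part of `O.bag (some a)` in
layer `j`, then trading `O.bag (some a)` for `O.bag (some b)` inside layer `j + 1`. -/
lemma exists_reach_shift [DecidableEq P] {m0 : P → ℕ} {j : ℕ} (hcover : O.CanCover m0 j)
    {m : P → ℕ} (hm : Reach O.Wm O.Wp m0 m) {a b : P} (ha : O.layer a = j + 1)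
    (hb : O.layer b = j + 1) (hma : 0 < m a) (hpot : O.pot a ≤ ∑ p ∈ O.places j, m p) :
    ∃ m', Reach O.Wm O.Wp m m' ∧
      ∀ p, j < O.layer p → m' p + (if p = a then 1 else 0) = m p + (if p = b then 1 else 0) := by
  set τ : P → ℕ := fun p => if O.layer p = j then O.bag (some a) p else 0 with hτ
  have hτmax : ∀ p, τ p ≠ 0 → p ∈ O.placesMax j := by
    intro p hp
    simp only [hτ] at hp
    split_ifs at hp with hpj
    · have hpa : some p ≠ some a := fun e => by
        rw [Option.some_injective _ e] at hpj
        omega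
      simpa [hpj] using (O.mem_placesMax_of_bag_ne_zero hpa hp).2
    · exact absurd rfl hp
  have hτsum : ∑ p ∈ O.places j, τ p = O.pot a := by
    have := O.closed.layer_le (some a)
    simp only [closed_layer_some] at this
    rw [Finset.sum_congr rfl fun p hp => if_pos (O.mem_places.mp hp),
      O.sum_bag_places (by omega)]
    simp [ha]
  obtain ⟨m₁, hr₁, hup₁, hτ₁⟩ := hcover m τ hm hτmax (hτsum ▸ hpot)
  have hen : O.bag (some a) ≤ m₁ := by
    intro p
    by_cases hpj : O.layer p = j
    · simpa [hτ, hpj] using hτ₁ p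
    by_cases hpa : p = a
    · subst hpa
      rw [bag_self, hup₁ p (by omega)]
      exact hma
    · rw [O.bag_eq_zero_of_ne (by simpa using hpa) (by simp; omega)]
      exact Nat.zero_le _
  refine ⟨m₁ - O.bag (some a) + O.bag (some b),
    hr₁.trans (O.reach_of_layer_eq (by simp [ha, hb]) hen), fun p hp => ?_⟩
  have hbag : ∀ c, O.layer c = j + 1 → O.bag (some c) p = if p = c then 1 else 0 := by
    intro c hc
    split_ifs with h
    · subst h
      simp
    · exact O.bag_eq_zero_of_ne (by simpa using h) (by simp; omega)
  have h1 := hup₁ p hp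
  have h2 := hen p
  simp only [Pi.add_apply, Pi.sub_apply, hbag a ha, hbag b hb] at h2 ⊢
  split_ifs at h2 ⊢ <;> omega

/-- If the least potential among marked places of layer `j + 1` is attained at a surplus
place, take that place; otherwise it is attained inside `O.placesMax (j + 1)`, so every marked
place of layer `j + 1`, in particular every surplus place, has maximal potential. -/
lemma exists_surplus_place {m0 : P → ℕ} (hlive : LiveMarked O.Wm O.Wp m0) {m τ : P → ℕ}
    (hm : Reach O.Wm O.Wp m0 m) {j : ℕ} (hj : j + 1 < Nn)
    (hτ : ∀ p, τ p ≠ 0 → p ∈ O.placesMax (j + 1))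
    (hsum : ∑ p ∈ O.places (j + 1), τ p ≤ ∑ p ∈ O.places (j + 1), m p) {b : P}
    (hb : m b < τ b) : ∃ a, O.layer a = j + 1 ∧ τ a < m a ∧ O.pot a ≤ ∑ p ∈ O.places j, m p := by
  classical
  obtain ⟨a, ha, hsurplus⟩ : ∃ a ∈ O.places (j + 1), τ a < m a := by
    by_contra! h
    have hb' := O.mem_places.mpr (O.layer_of_mem_placesMax (hτ b (by omega)))
    exact absurd hsum (not_le.mpr (Finset.sum_lt_sum h ⟨b, hb', hb⟩))
  obtain ⟨c, hc, hmin⟩ := Finset.exists_min_image ((O.places (j + 1)).filter (0 < m ·)) O.pot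
    ⟨a, Finset.mem_filter.mpr ⟨ha, by omega⟩⟩
  simp only [Finset.mem_filter, O.mem_places] at hc hmin
  have hbound : ∀ a', O.layer a' = j + 1 → O.pot a' ≤ O.pot c →
      O.pot a' ≤ ∑ p ∈ O.places j, m p := fun a' ha' hle =>
    O.pot_le_sum_places_of_le_marked hlive hm hj ha'
      fun c' hc' hpos => hle.trans (hmin c' ⟨hc', hpos⟩)
  by_cases hc_surplus : τ c < m c
  · exact ⟨c, hc.1, hc_surplus, hbound c hc.1 le_rfl⟩
  · have ha' := O.mem_places.mp ha
    exact ⟨a, ha', hsurplus,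
      hbound a ha' (O.pot_le_of_mem_placesMax (by omega) ha' (hτ c (by omega)))⟩

/-- The demand is met one token at a time: each shift from a surplus place to a place short of
its demand lowers the total shortfall by one. -/
lemma canCover_succ {m0 : P → ℕ} (hlive : LiveMarked O.Wm O.Wp m0) {j : ℕ} (hj : j + 1 < Nn)
    (hcover : O.CanCover m0 j) : O.CanCover m0 (j + 1) := by
  classical
  intro m τ hm hτ hsum
  induction hD : ∑ p ∈ O.places (j + 1), (τ p - m p) using Nat.strong_induction_on
    generalizing m with
  | _ D ih =>
  by_cases hdone : τ ≤ m
  · exact ⟨m, .refl, fun _ _ => rfl, hdone⟩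
  obtain ⟨b, hb⟩ : ∃ b, m b < τ b := by simpa [Pi.le_def] using hdone
  have hbl := O.layer_of_mem_placesMax (hτ b (by omega))
  obtain ⟨a, hal, hsurplus, hpot⟩ := O.exists_surplus_place hlive hm hj hτ hsum hb
  obtain ⟨m', hr, hshift⟩ := O.exists_reach_shift hcover hm hal hbl (by omega) hpot
  have hab : a ≠ b := by
    rintro rfl
    omega
  have hsum' : ∑ p ∈ O.places (j + 1), m' p = ∑ p ∈ O.places (j + 1), m p := by
    have := Finset.sum_congr rfl fun p (hp : p ∈ O.places (j + 1)) =>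
      hshift p (by rw [O.mem_places.mp hp]; omega)
    simp only [Finset.sum_add_distrib, Finset.sum_ite_eq', O.mem_places, hal, hbl] at this
    omega
  have hD' : ∑ p ∈ O.places (j + 1), (τ p - m' p) < D := by
    rw [← hD]
    refine Finset.sum_lt_sum (fun p hp => ?_) ⟨b, O.mem_places.mpr hbl, ?_⟩
    · have := hshift p (by rw [O.mem_places.mp hp]; omega)
      split_ifs at this <;> subst_vars <;> omega
    · have := hshift b (by omega)
      simp only [if_neg hab.symm, if_true] at this
      omega
  obtain ⟨m'', hr', hup', hτ'⟩ := ih _ hD' m' (hm.trans hr) (hsum'.symm ▸ hsum) rfl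
  refine ⟨m'', hr.trans hr', fun p hp => ?_, hτ'⟩
  have := hshift p (by omega)
  rw [if_neg (by rintro rfl; omega), if_neg (by rintro rfl; omega)] at this
  rw [hup' p hp]
  omega

lemma canCover_of_lt {m0 : P → ℕ} (hlive : LiveMarked O.Wm O.Wp m0) :
    ∀ j, j < Nn → O.CanCover m0 j
  | 0, _ => O.canCover_zero m0
  | j + 1, hj => O.canCover_succ hlive hj (canCover_of_lt hlive j (by omega))

lemma exists_reach_of_potExt_le {m0 : P → ℕ} (hlive : LiveMarked O.Wm O.Wp m0) {q : P}
    (hq : O.layer q = Nn) (hpot : O.potExt ≤ O.pot q) (k : ℕ) :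
    ∃ m, Reach O.Wm O.Wp m0 m ∧ O.bag none ≤ m ∧ k ≤ m q := by
  have hNn := O.closed.layer_pos (some q)
  simp only [closed_layer_some, hq] at hNn
  induction k with
  | zero =>
    obtain ⟨t, ht⟩ := O.exists_transition_from none
    obtain ⟨m, hm, hen⟩ := hlive t m0 .refl
    exact ⟨m, hm, O.bag_eq_Wm ht ▸ hen, Nat.zero_le _⟩
  | succ k ih =>
    obtain ⟨m, hm, hen, hk⟩ := ih
    have hr₁ : Reach O.Wm O.Wp m (m - O.bag none + O.bag (some q)) :=
      O.reach_of_layer_eq (by simp [O.pext_layer, hq]) hen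
    have hτ : ∀ p, O.bag none p ≠ 0 → p ∈ O.placesMax (Nn - 1) := fun p hp => by
      have := O.mem_placesMax_of_bag_ne_zero (Option.some_ne_none p) hp
      rw [O.pext_layer] at this
      rw [← show O.layer p = Nn - 1 by omega]
      exact this.2
    have hsum : ∑ p ∈ O.places (Nn - 1), O.bag none p ≤
        ∑ p ∈ O.places (Nn - 1), (m - O.bag none + O.bag (some q)) p :=
      calc ∑ p ∈ O.places (Nn - 1), O.bag none p = O.potExt := O.potExt_eq_sum_bag.symm
        _ ≤ O.pot q := hpot
        _ = ∑ p ∈ O.places (Nn - 1), O.bag (some q) p := by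
          rw [O.sum_bag_places (by omega)]
          simp only [closed_layer_some, hq, closed_pot_some]
          rw [if_neg (show Nn ≠ Nn - 1 by omega), if_pos (show Nn = Nn - 1 + 1 by omega), zero_add]
        _ ≤ _ := Finset.sum_le_sum fun p _ => le_add_self
    obtain ⟨m₂, hr₂, hup₂, hτ₂⟩ :=
      O.canCover_of_lt hlive (Nn - 1) (by omega) _ _ (hm.trans hr₁) hτ hsum
    refine ⟨m₂, hm.trans (hr₁.trans hr₂), hτ₂, ?_⟩
    rw [hup₂ q (by omega), Pi.add_apply, Pi.sub_apply, bag_self,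
      O.bag_eq_zero_of_ne (Option.some_ne_none q) (by rw [O.pext_layer, hq]; omega)]
    omega

lemma not_bounded_of_cin_nonpos {m0 : P → ℕ} (hlive : LiveMarked O.Wm O.Wp m0) {q : P}
    (hq : q ∈ O.places Nn) (hcin : O.cin q ≤ 0) :
    ¬ ∃ B : ℕ, ∀ m : P → ℕ, Reach O.Wm O.Wp m0 m → ∑ p, m p ≤ B := by
  rintro ⟨B, hB⟩
  have hql := O.mem_places.mp hq
  have hpot : O.potExt ≤ O.pot q := by
    rw [cin, hql, POT, if_pos rfl] at hcin
    omega
  obtain ⟨m, hm, -, hk⟩ := O.exists_reach_of_potExt_le hlive hql hpot (B + 1)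
  have := Finset.single_le_sum (fun p _ => Nat.zero_le (m p)) (Finset.mem_univ q)
  have := hB m hm
  omega

lemma exists_bound_of_cin_pos (hcin : ∀ q ∈ O.places Nn, 0 < O.cin q) (m0 : P → ℕ) :
    ∃ B : ℕ, ∀ m : P → ℕ, Reach O.Wm O.Wp m0 m → ∑ p, m p ≤ B := by
  refine ⟨(∑ i ∈ Finset.Icc 1 (Nn - 1), O.vdot i m0).toNat, fun m hm => ?_⟩
  have := O.sum_le_sum_vdot hcin hm
  have hcast : ((∑ p, m p : ℕ) : ℤ) = ∑ p, (m p : ℤ) := Nat.cast_sum _ _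
  omega

end OpenPi3

/-- A live marked N-layer open Π³-net is bounded iff `cin(q) > 0`
for every `q ∈ P_N`; when this holds, `‖m‖ ≤ Σ_{i=1}^{N−1} C_i^{m0}` for every
reachable `m`. -/
theorem stmt_6 (P T : Type) [Fintype P] [Fintype T] (Nn : ℕ)
    (O : OpenPi3 P T Nn) (m0 : P → ℕ) (hlive : LiveMarked O.Wm O.Wp m0) :
    ((∃ B : ℕ, ∀ m : P → ℕ, Reach O.Wm O.Wp m0 m → ∑ p, m p ≤ B) ↔
      ∀ q ∈ O.places Nn, 0 < O.cin q) ∧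
    ((∀ q ∈ O.places Nn, 0 < O.cin q) →
      ∀ m : P → ℕ, Reach O.Wm O.Wp m0 m →
        (∑ p, (m p : ℤ)) ≤ ∑ i ∈ Finset.Icc 1 (Nn - 1), O.vdot i m0) := by
  refine ⟨⟨fun hB q hq => ?_, fun hcin => O.exists_bound_of_cin_pos hcin m0⟩,
    fun hcin _ => O.sum_le_sum_vdot hcin⟩
  by_contra hcin
  exact O.not_bounded_of_cin_nonpos hlive hq (not_lt.mp hcin) hB
end

section
/- Let N be an N-layer (open or closed) Π³-net. (1) Fix 1≤i≤N, a marking m, and p∈P_i with m(p)≥1 and m(q)≥b_p(q) for every q∈P_{i−1}; then for every p'∈P_i with p'≠p there exists m'∈R_{=i}(m) such that m'(p)=m(p)−1, m'(p')=m(p')+1, and m'(p'')=m(p'') for all p''∈P_i∖{p,p'}. (2) If the net is open, and p∈P_N satisfies m(p)≥1 and m(q)≥b_p(q) for every q∈P_{N−1}, then there exists m'∈R_{=N}(m) such that m'(p)=m(p)−1 and m'(p'')=m(p'') for all p''∈P_N∖{p}. (3) If the net is open and m(q)≥b_{p_ext}(q) for every q∈P_{N−1} (where b_{p_ext} is the bag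 of p_ext in the underlying closed net), then for every p'∈P_N there exists m'∈R_{=N}(m) such that m'(p')=m(p')+1 and m'(p'')=m(p'') for all p''∈P_N∖{p'}. -/
open Finset

section Aux

variable {P T : Type} [Fintype P] [Fintype T] {Nn : ℕ} (C : ClosedPi3 P T Nn)

/-- A bag has no entry at another place of the same layer. -/
lemma aux_bag_same_layer_zero {p q : P} (h : C.layer q = C.layer p) (hne : q ≠ p) :
    C.bag p q = 0 := by
  by_contra h0
  have := (C.resource p q hne (Nat.pos_of_ne_zero h0)).1
  omega

/-- Every bag reachable from `C.bag a` in the bag graph is the bag of a place in the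
same layer as `a`. -/
lemma aux_reach_bag {a : P} {b : P → ℕ}
    (hb : Relation.ReflTransGen (BagEdge C.Wm C.Wp) (C.bag a) b) :
    ∃ q, C.bag q = b ∧ C.layer q = C.layer a := by
  induction hb with
  | refl => exact ⟨a, rfl, rfl⟩
  | tail hab hbc ih =>
    obtain ⟨q, hq, hl⟩ := ih
    obtain ⟨t, ht1, ht2⟩ := hbc
    obtain ⟨q', hq'⟩ := C.bag_surj _ ⟨t, Or.inr ht2⟩
    refine ⟨q', hq', ?_⟩
    rw [← hl]
    exact (C.edge_layer q q' (by rw [hq, hq']; exact ⟨t, ht1, ht2⟩)).symm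

/-- Walking along a bag-graph path within layer `i` moves a token accordingly.
The map `ι` allows restricting the marking to a subset of places (for open nets). -/
lemma aux_walk {Q : Type} [Fintype Q] (ι : Q → P) {a : P} {i : ℕ} (ha : C.layer a = i)
    (m : Q → ℕ) (hm : ∀ r, C.bag a (ι r) ≤ m r)
    {b : P → ℕ} (hb : Relation.ReflTransGen (BagEdge C.Wm C.Wp) (C.bag a) b) :
    ReachIn (fun r t => C.Wm (ι r) t) (fun r t => C.Wp (ι r) t) (C.transIn (· = i))
      m (fun r => m r - C.bag a (ι r) + b (ι r)) := by
  induction hb with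
  | refl =>
    have h : (fun r => m r - C.bag a (ι r) + C.bag a (ι r)) = m := by
      funext r; exact Nat.sub_add_cancel (hm r)
    rw [h]
    exact Relation.ReflTransGen.refl
  | @tail b' b'' hab hbc ih =>
    obtain ⟨t, hWm, hWp⟩ := hbc
    obtain ⟨q, hq, hql⟩ := aux_reach_bag C hab
    refine Relation.ReflTransGen.tail ih ⟨t, ⟨q, by rw [hql, ha], by rw [hq, hWm]⟩, ?_, ?_⟩
    · intro r
      have h1 : C.Wm (ι r) t = b' (ι r) := by rw [hWm]
      show C.Wm (ι r) t ≤ m r - C.bag a (ι r) + b' (ι r)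
      rw [h1]
      exact Nat.le_add_left _ _
    · funext r
      have h1 : C.Wm (ι r) t = b' (ι r) := by rw [hWm]
      have h2 : C.Wp (ι r) t = b'' (ι r) := by rw [hWp]
      show (m r - C.bag a (ι r) + b'' (ι r)) =
        (m r - C.bag a (ι r) + b' (ι r)) - C.Wm (ι r) t + C.Wp (ι r) t
      rw [h1, h2, Nat.add_sub_cancel]

end Aux

/-- token moves within a layer whose resources are available:
part (1) for open and closed nets, parts (2) and (3) for open nets. -/
theorem stmt_11 :
    -- (1), closed nets
    (∀ (P T : Type) [Fintype P] [Fintype T] (Nn : ℕ) (C : ClosedPi3 P T Nn),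
      ∀ i ∈ Finset.Icc 1 Nn, ∀ (m : P → ℕ) (p : P), C.layer p = i →
        1 ≤ m p → (∀ q, C.layer q = i - 1 → C.bag p q ≤ m q) →
        ∀ p' : P, C.layer p' = i → p' ≠ p →
          ∃ m', ReachIn C.Wm C.Wp (C.transIn (· = i)) m m' ∧
            m' p = m p - 1 ∧ m' p' = m p' + 1 ∧
            ∀ p'', C.layer p'' = i → p'' ≠ p → p'' ≠ p' → m' p'' = m p'') ∧
    -- (1), open nets
    (∀ (P T : Type) [Fintype P] [Fintype T] (Nn : ℕ) (O : OpenPi3 P T Nn),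
      ∀ i ∈ Finset.Icc 1 Nn, ∀ (m : P → ℕ) (p : P), O.layer p = i →
        1 ≤ m p →
        (∀ q, O.layer q = i - 1 → O.closed.bag (some p) (some q) ≤ m q) →
        ∀ p' : P, O.layer p' = i → p' ≠ p →
          ∃ m', ReachIn O.Wm O.Wp (O.transIn (· = i)) m m' ∧
            m' p = m p - 1 ∧ m' p' = m p' + 1 ∧
            ∀ p'', O.layer p'' = i → p'' ≠ p → p'' ≠ p' → m' p'' = m p'') ∧
    -- (2), open nets
    (∀ (P T : Type) [Fintype P] [Fintype T] (Nn : ℕ) (O : OpenPi3 P T Nn),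
      ∀ (m : P → ℕ) (p : P), O.layer p = Nn →
        1 ≤ m p →
        (∀ q, O.layer q = Nn - 1 → O.closed.bag (some p) (some q) ≤ m q) →
        ∃ m', ReachIn O.Wm O.Wp (O.transIn (· = Nn)) m m' ∧
          m' p = m p - 1 ∧
          ∀ p'', O.layer p'' = Nn → p'' ≠ p → m' p'' = m p'') ∧
    -- (3), open nets
    (∀ (P T : Type) [Fintype P] [Fintype T] (Nn : ℕ) (O : OpenPi3 P T Nn),
      ∀ m : P → ℕ,
        (∀ q, O.layer q = Nn - 1 → O.closed.bag none (some q) ≤ m q) →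
        ∀ p' : P, O.layer p' = Nn →
          ∃ m', ReachIn O.Wm O.Wp (O.transIn (· = Nn)) m m' ∧
            m' p' = m p' + 1 ∧
            ∀ p'', O.layer p'' = Nn → p'' ≠ p' → m' p'' = m p'') := by
  refine ⟨?_, ?_, ?_, ?_⟩
  · -- (1), closed nets
    intro P T _ _ Nn C i hi m p hp hmp hres p' hp' hne
    obtain ⟨hi1, hi2⟩ := Finset.mem_Icc.mp hi
    have hm : ∀ r, C.bag p r ≤ m r := by
      intro r
      by_cases hr : r = p
      · subst hr; rw [C.bag_self]; exact hmp
      · rcases Nat.eq_zero_or_pos (C.bag p r) with h0 | h0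
        · omega
        · have hr1 := (C.resource p r hr h0).1
          exact hres r (by omega)
    have hpath := C.layer_conn p p' (hp.trans hp'.symm)
    have hw := aux_walk C id hp m hm hpath
    refine ⟨_, hw, ?_, ?_, ?_⟩
    · show m p - C.bag p p + C.bag p' p = m p - 1
      rw [C.bag_self, aux_bag_same_layer_zero C (hp.trans hp'.symm) (Ne.symm hne)]
      omega
    · show m p' - C.bag p p' + C.bag p' p' = m p' + 1
      rw [C.bag_self, aux_bag_same_layer_zero C (hp'.trans hp.symm) hne]
      omega
    · intro p'' h1 h2 h3
      show m p'' - C.bag p p'' + C.bag p' p'' = m p''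
      rw [aux_bag_same_layer_zero C (h1.trans hp.symm) h2,
        aux_bag_same_layer_zero C (h1.trans hp'.symm) h3]
      omega
  · -- (1), open nets
    intro P T _ _ Nn O i hi m p hp hmp hres p' hp' hne
    set C := O.closed with hC
    have hm : ∀ r : P, C.bag (some p) (some r) ≤ m r := by
      intro r
      by_cases hr : r = p
      · subst hr; rw [C.bag_self]; exact hmp
      · rcases Nat.eq_zero_or_pos (C.bag (some p) (some r)) with h0 | h0
        · omega
        · have hr1 := (C.resource (some p) (some r) (by simpa using hr) h0).1
          have hl : O.layer r = i - 1 := by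
            have : O.layer r + 1 = i := by rw [← hp]; exact hr1
            omega
          exact hres r hl
    have hpp' : C.layer (some p) = C.layer (some p') := hp.trans hp'.symm
    have hpath := C.layer_conn (some p) (some p') hpp'
    have hw := aux_walk C (fun r : P => some r) hp m hm hpath
    refine ⟨_, hw, ?_, ?_, ?_⟩
    · show m p - C.bag (some p) (some p) + C.bag (some p') (some p) = m p - 1
      rw [C.bag_self, aux_bag_same_layer_zero C hpp' (by simpa using Ne.symm hne)]
      omega
    · show m p' - C.bag (some p) (some p') + C.bag (some p') (some p') = m p' + 1
      rw [C.bag_self, aux_bag_same_layer_zero C hpp'.symm (by simpa using hne)]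
      omega
    · intro p'' h1 h2 h3
      show m p'' - C.bag (some p) (some p'') + C.bag (some p') (some p'') = m p''
      rw [aux_bag_same_layer_zero C (show C.layer (some p'') = C.layer (some p) from
            h1.trans hp.symm) (by simpa using h2),
        aux_bag_same_layer_zero C (show C.layer (some p'') = C.layer (some p') from
            h1.trans hp'.symm) (by simpa using h3)]
      omega
  · -- (2), open nets
    intro P T _ _ Nn O m p hp hmp hres
    set C := O.closed with hC
    have hN : 1 ≤ Nn := by have := C.layer_pos none; rwa [O.pext_layer] at this
    have hm : ∀ r : P, C.bag (some p) (some r) ≤ m r := by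
      intro r
      by_cases hr : r = p
      · subst hr; rw [C.bag_self]; exact hmp
      · rcases Nat.eq_zero_or_pos (C.bag (some p) (some r)) with h0 | h0
        · omega
        · have hr1 := (C.resource (some p) (some r) (by simpa using hr) h0).1
          have hl : O.layer r = Nn - 1 := by
            have h2 : O.layer r = C.layer (some r) := rfl
            have h3 : C.layer (some p) = Nn := hp
            omega
          exact hres r hl
    have hpn : C.layer (some p) = C.layer none := hp.trans O.pext_layer.symm
    have hpath := C.layer_conn (some p) none hpn
    have hw := aux_walk C (fun r : P => some r) hp m hm hpath
    refine ⟨_, hw, ?_, ?_⟩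
    · show m p - C.bag (some p) (some p) + C.bag none (some p) = m p - 1
      rw [C.bag_self, aux_bag_same_layer_zero C hpn (by simp)]
      omega
    · intro p'' h1 h2
      show m p'' - C.bag (some p) (some p'') + C.bag none (some p'') = m p''
      rw [aux_bag_same_layer_zero C (show C.layer (some p'') = C.layer (some p) from
            h1.trans hp.symm) (by simpa using h2),
        aux_bag_same_layer_zero C (show C.layer (some p'') = C.layer none from
            h1.trans O.pext_layer.symm) (by simp)]
      omega
  · -- (3), open nets
    intro P T _ _ Nn O m hres p' hp'
    set C := O.closed with hC
    have hN : 1 ≤ Nn := by have := C.layer_pos none; rwa [O.pext_layer] at this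
    have hm : ∀ r : P, C.bag none (some r) ≤ m r := by
      intro r
      rcases Nat.eq_zero_or_pos (C.bag none (some r)) with h0 | h0
      · omega
      · have hr1 := (C.resource none (some r) (by simp) h0).1
        have hl : O.layer r = Nn - 1 := by
          have h2 : O.layer r = C.layer (some r) := rfl
          have h3 : C.layer none = Nn := O.pext_layer
          omega
        exact hres r hl
    have hnp : C.layer none = C.layer (some p') := O.pext_layer.trans hp'.symm
    have hpath := C.layer_conn none (some p') hnp
    have hw := aux_walk C (fun r : P => some r) O.pext_layer m hm hpath
    refine ⟨_, hw, ?_, ?_⟩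
    · show m p' - C.bag none (some p') + C.bag (some p') (some p') = m p' + 1
      rw [C.bag_self, aux_bag_same_layer_zero C hnp.symm (by simp)]
      omega
    · intro p'' h1 h2
      show m p'' - C.bag none (some p'') + C.bag (some p') (some p'') = m p''
      rw [aux_bag_same_layer_zero C (show C.layer (some p'') = C.layer none from
            h1.trans O.pext_layer.symm) (by simp),
        aux_bag_same_layer_zero C (show C.layer (some p'') = C.layer (some p') from
            h1.trans hp'.symm) (by simpa using h2)]
      omega
end
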